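/- arXiv:2501.18363 — 8 statements merged into one kernel-verified Lean document; each statement's English description precedes it below -/
import Mathlib

section
/- Under the single-step uniform label noise model with noise rate ε ∈ (0,1), for every α ∈ (0,1) and every fixed τ ∈ ℝ, the robust pinball loss is an unbiased estimate of the clean pinball loss: E[l(τ, S)] = E[ (1/(1−ε))·l(τ, S̃) − (ε/(K(1−ε)))·Σ_{y=1}^K l(τ, S_y) ]. -/
/-!
On the event `ε ≤ U` the noisy label is the clean one, and otherwise it is the uniform label `Ȳ`,
so `f(X, Ỹ) = 1{ε ≤ U} f(X, Y) + ∑ y, 1{U < ε, Ȳ = y} f(X, y)`. Since `(U, Ȳ)` is independent of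
`(X, Y)`, each expectation factors, and `U ⊥ Ȳ` gives `P(U < ε, Ȳ = y) = ε / K`; hence
`E f(X, Ỹ) = (1 - ε) E f(X, Y) + ε / K ∑ y, E f(X, y)` for every integrable loss `f`, and solving
for `E f(X, Y)` is the claim. The pinball loss is continuous, so it is bounded on the range `[0, 1]` of
the score, which gives the integrability.
-/

open MeasureTheory ProbabilityTheory

/-- The pinball loss at level `1 - α`. -/
noncomputable def pinball (α τ s : ℝ) : ℝ :=
  α * (τ - s) * (if s ≤ τ then (1:ℝ) else 0) + (1 - α) * (s - τ) * (if τ < s then (1:ℝ) else 0)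

open Set

lemma pinball_eq_max (α τ s : ℝ) :
    pinball α τ s = α * max (τ - s) 0 + (1 - α) * max (s - τ) 0 := by
  rcases le_or_gt s τ with h | h
  · simp [pinball, h, not_lt.2 h]
  · simp [pinball, h, not_le.2 h, h.le]

lemma continuous_pinball (α τ : ℝ) : Continuous (pinball α τ) := by
  rw [show pinball α τ = _ from funext (pinball_eq_max α τ)]
  fun_prop

lemma Continuous.integrable_comp_of_mem_isCompact {Ω : Type*} [MeasurableSpace Ω]
    {μ : Measure Ω} [IsFiniteMeasure μ] {g : ℝ → ℝ} (hg : Continuous g) {s : Set ℝ}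
    (hs : IsCompact s) {f : Ω → ℝ} (hf : AEStronglyMeasurable f μ) (hfs : ∀ ω, f ω ∈ s) :
    Integrable (fun ω => g (f ω)) μ := by
  obtain ⟨C, hC⟩ := hs.exists_bound_of_continuousOn hg.continuousOn
  exact .of_bound (hg.comp_aestronglyMeasurable hf) C (ae_of_all _ fun ω => hC _ (hfs ω))

lemma measureReal_preimage_Iio_of_map_eq_uniform {Ω : Type*} [MeasurableSpace Ω] {μ : Measure Ω}
    {U : Ω → ℝ} (hU : AEMeasurable U μ) (hU_unif : μ.map U = volume.restrict (Icc 0 1))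
    {ε : ℝ} (hε : ε ∈ Icc (0:ℝ) 1) : μ.real (U ⁻¹' Iio ε) = ε := by
  rw [measureReal_def, ← Measure.map_apply_of_aemeasurable hU measurableSet_Iio, hU_unif,
    Measure.restrict_apply measurableSet_Iio]
  have hIco : Iio ε ∩ Icc 0 1 = Ico 0 ε := Set.ext fun x =>
    ⟨fun ⟨hxε, hx0, _⟩ => ⟨hx0, hxε⟩, fun ⟨hx0, hxε⟩ => ⟨hxε, hx0, hxε.le.trans hε.2⟩⟩
  rw [hIco, Real.volume_Ico, sub_zero, ENNReal.toReal_ofReal hε.1]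

lemma measureReal_preimage_Ici_of_map_eq_uniform {Ω : Type*} [MeasurableSpace Ω] {μ : Measure Ω}
    [IsProbabilityMeasure μ]
    {U : Ω → ℝ} (hU : Measurable U) (hU_unif : μ.map U = volume.restrict (Icc 0 1))
    {ε : ℝ} (hε : ε ∈ Icc (0:ℝ) 1) : μ.real (U ⁻¹' Ici ε) = 1 - ε := by
  rw [← compl_Iio, preimage_compl, probReal_compl_eq_one_sub (hU measurableSet_Iio),
    measureReal_preimage_Iio_of_map_eq_uniform hU.aemeasurable hU_unif hε]

lemma ProbabilityTheory.IndepFun.integral_indicator_preimage_comp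
    {Ω α β : Type*} [MeasurableSpace Ω] [MeasurableSpace α] [MeasurableSpace β] {μ : Measure Ω}
    {W : Ω → α} {Z : Ω → β} (h : IndepFun W Z μ) (hW : Measurable W) (hZ : Measurable Z)
    {s : Set α} (hs : MeasurableSet s) {g : β → ℝ} (hg : Measurable g) :
    ∫ ω, (W ⁻¹' s).indicator (fun ω => g (Z ω)) ω ∂μ = μ.real (W ⁻¹' s) * ∫ ω, g (Z ω) ∂μ := by
  have hφ : Measurable (s.indicator (1 : α → ℝ)) := measurable_one.indicator hs
  calc ∫ ω, (W ⁻¹' s).indicator (fun ω => g (Z ω)) ω ∂μ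
      = ∫ ω, ((s.indicator 1 ∘ W) * (g ∘ Z) : Ω → ℝ) ω ∂μ := by
        congr 1 with ω
        by_cases hω : W ω ∈ s <;> simp [hω]
    _ = (∫ ω, (s.indicator 1 ∘ W) ω ∂μ) * ∫ ω, g (Z ω) ∂μ :=
        (h.comp hφ hg).integral_mul_eq_mul_integral (hφ.comp hW).aestronglyMeasurable
          (hg.comp hZ).aestronglyMeasurable
    _ = μ.real (W ⁻¹' s) * ∫ ω, g (Z ω) ∂μ := by
        rw [← integral_indicator_one (hW hs)]
        rfl

lemma ProbabilityTheory.iIndep.indepFun_prodMk_of_comap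
    {Ω α β γ : Type*} [mΩ : MeasurableSpace Ω] [mα : MeasurableSpace α] [mβ : MeasurableSpace β]
    [mγ : MeasurableSpace γ] {μ : Measure Ω} {A : Ω → α} {B : Ω → β} {C : Ω → γ}
    (hA : Measurable A) (hB : Measurable B) (hC : Measurable C)
    (h : iIndep ![mα.comap A, mβ.comap B, mγ.comap C] μ) :
    IndepFun (fun ω => (A ω, B ω)) C μ := by
  have h_le : ∀ i, ![mα.comap A, mβ.comap B, mγ.comap C] i ≤ mΩ := by
    intro i
    fin_cases i
    exacts [hA.comap_le, hB.comap_le, hC.comap_le]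
  have := indep_iSup_of_disjoint h_le h (S := {0, 1}) (T := {2}) (by simp)
  rw [iSup_pair, iSup_singleton] at this
  rw [IndepFun_iff_Indep]
  convert this using 1
  exacts [MeasurableSpace.comap_prodMk A B, rfl]

theorem integral_comp_noisyLabel {Ω 𝒳 : Type*} [MeasurableSpace Ω] [MeasurableSpace 𝒳]
    {μ : Measure Ω} [IsProbabilityMeasure μ] {K : ℕ} {ε : ℝ} (hε : ε ∈ Icc (0:ℝ) 1)
    {X : Ω → 𝒳} {Y Ybar Ytil : Ω → Fin K} {U : Ω → ℝ}
    (hX : Measurable X) (hY : Measurable Y) (hU : Measurable U) (hYbar : Measurable Ybar)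
    (hU_unif : μ.map U = volume.restrict (Icc 0 1))
    (hYbar_unif : ∀ y, μ {ω | Ybar ω = y} = (K : ENNReal)⁻¹)
    (hUYbar : IndepFun U Ybar μ)
    (hnoise : IndepFun (fun ω => (U ω, Ybar ω)) (fun ω => (X ω, Y ω)) μ)
    (hYtil : ∀ ω, Ytil ω = if ε ≤ U ω then Y ω else Ybar ω)
    {f : 𝒳 → Fin K → ℝ} (hf : ∀ y, Measurable fun x => f x y)
    (hfY : Integrable (fun ω => f (X ω) (Y ω)) μ) (hfy : ∀ y, Integrable (fun ω => f (X ω) y) μ) :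
    ∫ ω, f (X ω) (Ytil ω) ∂μ
      = (1 - ε) * ∫ ω, f (X ω) (Y ω) ∂μ + ε / K * ∑ y, ∫ ω, f (X ω) y ∂μ := by
  set W : Ω → ℝ × Fin K := fun ω => (U ω, Ybar ω)
  have hW : Measurable W := hU.prodMk hYbar
  have hZ : Measurable fun ω => (X ω, Y ω) := hX.prodMk hY
  have hs_clean : MeasurableSet (Ici ε ×ˢ (univ : Set (Fin K))) := measurableSet_Ici.prod .univ
  have hs_noisy : ∀ y : Fin K, MeasurableSet (Iio ε ×ˢ {y}) :=
    fun y => measurableSet_Iio.prod (measurableSet_singleton y)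
  have hsplit : ∀ ω, f (X ω) (Ytil ω)
      = (W ⁻¹' (Ici ε ×ˢ univ)).indicator (fun ω => f (X ω) (Y ω)) ω
        + ∑ y, (W ⁻¹' (Iio ε ×ˢ {y})).indicator (fun ω => f (X ω) y) ω := by
    intro ω
    rw [hYtil ω]
    by_cases h : ε ≤ U ω
    · simp [W, h, not_lt.2 h]
    · simp [W, indicator, h, lt_of_not_ge h]
  have hp_clean : μ.real (W ⁻¹' (Ici ε ×ˢ univ)) = 1 - ε := by
    rw [mk_preimage_prod, preimage_univ, inter_univ]
    exact measureReal_preimage_Ici_of_map_eq_uniform hU hU_unif hε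
  have hp_noisy : ∀ y, μ.real (W ⁻¹' (Iio ε ×ˢ {y})) = ε / K := by
    intro y
    rw [mk_preimage_prod, measureReal_def,
      hUYbar.measure_inter_preimage_eq_mul _ _ measurableSet_Iio (measurableSet_singleton y),
      ENNReal.toReal_mul, ← measureReal_def,
      measureReal_preimage_Iio_of_map_eq_uniform hU.aemeasurable hU_unif hε,
      show Ybar ⁻¹' {y} = {ω | Ybar ω = y} from rfl, hYbar_unif y]
    simp [div_eq_mul_inv]
  calc ∫ ω, f (X ω) (Ytil ω) ∂μ
      = ∫ ω, (W ⁻¹' (Ici ε ×ˢ univ)).indicator (fun ω => f (X ω) (Y ω)) ω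
          + ∑ y, (W ⁻¹' (Iio ε ×ˢ {y})).indicator (fun ω => f (X ω) y) ω ∂μ :=
        integral_congr_ae (ae_of_all _ hsplit)
    _ = ∫ ω, (W ⁻¹' (Ici ε ×ˢ univ)).indicator (fun ω => f (X ω) (Y ω)) ω ∂μ
          + ∑ y, ∫ ω, (W ⁻¹' (Iio ε ×ˢ {y})).indicator (fun ω => f (X ω) y) ω ∂μ := by
        rw [integral_add (hfY.indicator (hW hs_clean))
            (integrable_finsetSum _ fun y _ => (hfy y).indicator (hW (hs_noisy y))),
          integral_finsetSum _ fun y _ => (hfy y).indicator (hW (hs_noisy y))]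
    _ = (1 - ε) * ∫ ω, f (X ω) (Y ω) ∂μ + ε / K * ∑ y, ∫ ω, f (X ω) y ∂μ := by
        rw [← hp_clean, Finset.mul_sum]
        congr 1
        · exact hnoise.integral_indicator_preimage_comp hW hZ hs_clean
            (measurable_from_prod_countable_left (f := fun p : 𝒳 × Fin K => f p.1 p.2) hf)
        · refine Finset.sum_congr rfl fun y _ => ?_
          rw [← hp_noisy y]
          exact hnoise.integral_indicator_preimage_comp hW hZ (hs_noisy y)
            ((hf y).comp measurable_fst)

theorem robust_pinball_loss_unbiased_general
    {Ω 𝒳 : Type*} [MeasurableSpace Ω] [MeasurableSpace 𝒳]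
    (μ : Measure Ω) [IsProbabilityMeasure μ]
    (K : ℕ) (ε : ℝ) (hε : ε ∈ Set.Ioo (0:ℝ) 1)
    (X : Ω → 𝒳) (Y : Ω → Fin K) (U : Ω → ℝ) (Ybar : Ω → Fin K)
    (hX : Measurable X) (hY : Measurable Y) (hU : Measurable U) (hYbar : Measurable Ybar)
    -- U is uniformly distributed on [0,1]
    (hU_unif : Measure.map U μ = volume.restrict (Set.Icc (0:ℝ) 1))
    -- Ȳ is uniformly distributed on {1,…,K}
    (hYbar_unif : ∀ y : Fin K, μ {ω | Ybar ω = y} = (K : ENNReal)⁻¹)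
    -- U, Ȳ and the pair (X, Y) are mutually independent
    (hIndep : iIndep
      ![MeasurableSpace.comap U inferInstance,
        MeasurableSpace.comap Ybar inferInstance,
        MeasurableSpace.comap (fun ω => (X ω, Y ω)) inferInstance] μ)
    -- the score function, measurable with values in [0,1]
    (𝒮 : 𝒳 → Fin K → ℝ) (h𝒮 : ∀ y, Measurable fun x => 𝒮 x y)
    (h𝒮range : ∀ x y, 𝒮 x y ∈ Set.Icc (0:ℝ) 1)
    -- the noisy label
    (Ytil : Ω → Fin K) (hYtil : ∀ ω, Ytil ω = if ε ≤ U ω then Y ω else Ybar ω)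
    (α τ : ℝ) :
    ∫ ω, pinball α τ (𝒮 (X ω) (Y ω)) ∂μ
      = ∫ ω, ((1 / (1 - ε)) * pinball α τ (𝒮 (X ω) (Ytil ω))
          - (ε / ((K : ℝ) * (1 - ε))) * ∑ y : Fin K, pinball α τ (𝒮 (X ω) y)) ∂μ := by
  have hε1 : 1 - ε ≠ 0 := sub_ne_zero.2 hε.2.ne'
  have hloss : ∀ y, Measurable fun x => pinball α τ (𝒮 x y) :=
    fun y => (continuous_pinball α τ).measurable.comp (h𝒮 y)
  have hint : ∀ Z : Ω → Fin K, Measurable Z →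
      Integrable (fun ω => pinball α τ (𝒮 (X ω) (Z ω))) μ := fun Z hZ =>
    (continuous_pinball α τ).integrable_comp_of_mem_isCompact isCompact_Icc
      ((measurable_from_prod_countable_left (f := fun p : 𝒳 × Fin K => 𝒮 p.1 p.2) h𝒮).comp
        (hX.prodMk hZ)).aestronglyMeasurable fun ω => h𝒮range _ _
  have hYtil_meas : Measurable Ytil := by
    rw [funext hYtil]
    exact Measurable.ite (measurableSet_le measurable_const hU) hY hYbar
  have hnoisy := integral_comp_noisyLabel (Ioo_subset_Icc_self hε) hX hY hU hYbar hU_unif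
    hYbar_unif (hIndep.indep (by decide : (0 : Fin 3) ≠ 1))
    (hIndep.indepFun_prodMk_of_comap hU hYbar (hX.prodMk hY)) hYtil hloss (hint Y hY)
    fun y => hint _ measurable_const
  rw [integral_sub ((hint Ytil hYtil_meas).const_mul _)
      ((integrable_finsetSum _ fun y _ => hint _ measurable_const).const_mul _),
    integral_const_mul, integral_const_mul, integral_finsetSum _ fun y _ => hint _ measurable_const,
    hnoisy, ← div_div]
  field_simp
  ring

/-- the robust pinball loss is an unbiased estimate of the clean pinball loss
under the single-step uniform label noise model. -/
theorem robust_pinball_loss_unbiased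
    {Ω 𝒳 : Type*} [MeasurableSpace Ω] [MeasurableSpace 𝒳]
    (μ : Measure Ω) [IsProbabilityMeasure μ]
    (K : ℕ) (hK : 1 ≤ K) (ε : ℝ) (hε : ε ∈ Set.Ioo (0:ℝ) 1)
    (X : Ω → 𝒳) (Y : Ω → Fin K) (U : Ω → ℝ) (Ybar : Ω → Fin K)
    (hX : Measurable X) (hY : Measurable Y) (hU : Measurable U) (hYbar : Measurable Ybar)
    -- U is uniformly distributed on [0,1]
    (hU_unif : Measure.map U μ = volume.restrict (Set.Icc (0:ℝ) 1))
    -- Ȳ is uniformly distributed on {1,…,K}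
    (hYbar_unif : ∀ y : Fin K, μ {ω | Ybar ω = y} = (K : ENNReal)⁻¹)
    -- U, Ȳ and the pair (X, Y) are mutually independent
    (hIndep : iIndep
      ![MeasurableSpace.comap U inferInstance,
        MeasurableSpace.comap Ybar inferInstance,
        MeasurableSpace.comap (fun ω => (X ω, Y ω)) inferInstance] μ)
    -- the score function, measurable with values in [0,1]
    (𝒮 : 𝒳 → Fin K → ℝ) (h𝒮 : ∀ y, Measurable fun x => 𝒮 x y)
    (h𝒮range : ∀ x y, 𝒮 x y ∈ Set.Icc (0:ℝ) 1)
    -- the noisy label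
    (Ytil : Ω → Fin K) (hYtil : ∀ ω, Ytil ω = if ε ≤ U ω then Y ω else Ybar ω)
    (α τ : ℝ) (hα : α ∈ Set.Ioo (0:ℝ) 1) :
    ∫ ω, pinball α τ (𝒮 (X ω) (Y ω)) ∂μ
      = ∫ ω, ((1 / (1 - ε)) * pinball α τ (𝒮 (X ω) (Ytil ω))
          - (ε / ((K : ℝ) * (1 - ε))) * ∑ y : Fin K, pinball α τ (𝒮 (X ω) y)) ∂μ :=
  robust_pinball_loss_unbiased_general μ K ε hε X Y U Ybar hX hY hU hYbar hU_unif hYbar_unif hIndep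
    𝒮 h𝒮 h𝒮range Ytil hYtil α τ
end

section
/- Under the single-step uniform label noise model with noise rate ε ∈ (0,1), for every α ∈ (0,1) and every fixed τ ∈ ℝ, the robust pinball subgradient is an unbiased estimate of the clean pinball subgradient: E[1{S ≤ τ} − (1−α)] = E[ (1/(1−ε))·(1{S̃ ≤ τ} − (1−α)) − (ε/(K(1−ε)))·Σ_{y=1}^K (1{S_y ≤ τ} − (1−α)) ]. -/
/-!
On the event `{ε ≤ U}`, of probability `1 - ε`, the noisy label is the clean one; on its
complement it is the independent uniform label `Ȳ`. Independence therefore gives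
`P(S̃ ≤ τ) = (1 - ε) P(S ≤ τ) + (ε / K) ∑_y P(S_y ≤ τ)`, and solving this for `P(S ≤ τ)`
is exactly the claimed identity of expectations.
-/

open MeasureTheory ProbabilityTheory Function

lemma sub_eq_robust_correction {K : ℕ} (hK : K ≠ 0) {ε : ℝ} (hε : ε ≠ 1) (b c q : ℝ)
    (d : Fin K → ℝ) (hq : q = (1 - ε) * b + ε * ∑ y, (K : ℝ)⁻¹ * d y) :
    b - c = 1 / (1 - ε) * (q - c) - ε / (K * (1 - ε)) * ∑ y, (d y - c) := by
  have hε' : 1 - ε ≠ 0 := sub_ne_zero.2 hε.symm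
  rw [hq, Finset.sum_sub_distrib, ← Finset.mul_sum, Finset.sum_const, Finset.card_univ,
    Fintype.card_fin, nsmul_eq_mul]
  field_simp
  ring

section

variable {Ω : Type*}

lemma setOf_ite_label_eq {ι : Type*} (a : Ω → Prop) [DecidablePred a] (Y Ybar : Ω → ι)
    (P : Ω → ι → Prop) :
    {ω | P ω (if a ω then Y ω else Ybar ω)}
      = ({ω | a ω} ∩ {ω | P ω (Y ω)}) ∪ ⋃ y, {ω | a ω}ᶜ ∩ {ω | Ybar ω = y} ∩ {ω | P ω y} := by
  ext ω
  by_cases ha : a ω <;> simp [ha]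

variable [MeasurableSpace Ω] {μ : Measure Ω}

lemma ProbabilityTheory.iIndep.measureReal_inter_inter {m : Fin 3 → MeasurableSpace Ω}
    (h : iIndep m μ) {s t u : Set Ω} (hs : MeasurableSet[m 0] s) (ht : MeasurableSet[m 1] t)
    (hu : MeasurableSet[m 2] u) : μ.real (s ∩ t ∩ u) = μ.real s * μ.real t * μ.real u := by
  have h3 := h.meas_iInter (s := ![s, t, u]) (fun i => by fin_cases i <;> assumption)
  rw [Fin.prod_univ_three] at h3
  have hinter : (⋂ i, ![s, t, u] i) = s ∩ t ∩ u := by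
    ext; simp [Fin.forall_fin_succ, and_assoc]
  simp [measureReal_def, ← hinter, h3]

lemma measureReal_setOf_le_of_map_eq_uniform {U : Ω → ℝ} (hU : Measurable U)
    (hunif : μ.map U = volume.restrict (Set.Icc 0 1)) {ε : ℝ} (hε : ε ∈ Set.Icc (0:ℝ) 1) :
    μ.real {ω | ε ≤ U ω} = 1 - ε := by
  have hIci : Set.Ici ε ∩ Set.Icc 0 1 = Set.Icc ε 1 := by
    ext x
    simp only [Set.mem_inter_iff, Set.mem_Ici, Set.mem_Icc]
    exact ⟨fun h => ⟨h.1, h.2.2⟩, fun h => ⟨h.1, hε.1.trans h.1, h.2⟩⟩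
  change μ.real (U ⁻¹' Set.Ici ε) = 1 - ε
  rw [← map_measureReal_apply hU measurableSet_Ici, hunif,
    measureReal_restrict_apply measurableSet_Ici, hIci, Real.volume_real_Icc,
    max_eq_left (by linarith [hε.2])]

lemma integrable_ite_one_zero [IsFiniteMeasure μ] {p : Ω → Prop} [DecidablePred p]
    (hp : MeasurableSet {ω | p ω}) : Integrable (fun ω => if p ω then (1:ℝ) else 0) μ := by
  refine ((integrable_const (1:ℝ)).indicator hp).congr (ae_of_all μ fun ω => ?_)
  simp [Set.indicator_apply]

lemma integrable_ite_one_zero_sub [IsFiniteMeasure μ] {p : Ω → Prop} [DecidablePred p]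
    (hp : MeasurableSet {ω | p ω}) (c : ℝ) :
    Integrable (fun ω => (if p ω then (1:ℝ) else 0) - c) μ :=
  (integrable_ite_one_zero hp).sub (integrable_const c)

lemma integral_ite_one_zero_sub [IsProbabilityMeasure μ] {p : Ω → Prop} [DecidablePred p]
    (hp : MeasurableSet {ω | p ω}) (c : ℝ) :
    ∫ ω, ((if p ω then (1:ℝ) else 0) - c) ∂μ = μ.real {ω | p ω} - c := by
  rw [integral_sub (integrable_ite_one_zero (μ := μ) hp) (integrable_const c)]
  simpa [Set.indicator_apply] using integral_indicator_one (μ := μ) hp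

lemma measureReal_setOf_ite_label [IsProbabilityMeasure μ] {ι : Type*} [Fintype ι]
    {m : Fin 3 → MeasurableSpace Ω} (hm : ∀ i, m i ≤ ‹MeasurableSpace Ω›) (hind : iIndep m μ)
    {a : Ω → Prop} [DecidablePred a] (ha : MeasurableSet[m 0] {ω | a ω})
    {Y Ybar : Ω → ι} (hYbar : ∀ y, MeasurableSet[m 1] {ω | Ybar ω = y})
    {P : Ω → ι → Prop} (hP : ∀ y, MeasurableSet[m 2] {ω | P ω y})
    (hPY : MeasurableSet[m 2] {ω | P ω (Y ω)}) :
    μ.real {ω | P ω (if a ω then Y ω else Ybar ω)}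
      = μ.real {ω | a ω} * μ.real {ω | P ω (Y ω)}
        + μ.real {ω | a ω}ᶜ * ∑ y, μ.real {ω | Ybar ω = y} * μ.real {ω | P ω y} := by
  have hpiece : ∀ y, MeasurableSet ({ω | a ω}ᶜ ∩ {ω | Ybar ω = y} ∩ {ω | P ω y}) := fun y =>
    ((hm 0 _ ha).compl.inter (hm 1 _ (hYbar y))).inter (hm 2 _ (hP y))
  have hdisj : Disjoint ({ω | a ω} ∩ {ω | P ω (Y ω)})
      (⋃ y, {ω | a ω}ᶜ ∩ {ω | Ybar ω = y} ∩ {ω | P ω y}) :=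
    Set.disjoint_iUnion_right.2 fun y =>
      (disjoint_compl_right.mono Set.inter_subset_left Set.inter_subset_left).mono_right
        Set.inter_subset_left
  have hfibres : Pairwise (Disjoint on fun y => {ω | a ω}ᶜ ∩ {ω | Ybar ω = y} ∩ {ω | P ω y}) :=
    fun y z hyz => Set.disjoint_left.2 fun ω hy hz => hyz (hy.1.2.symm.trans hz.1.2)
  have hfirst := hind.measureReal_inter_inter ha MeasurableSet.univ hPY
  simp only [Set.inter_univ, probReal_univ, mul_one] at hfirst
  rw [setOf_ite_label_eq, measureReal_union hdisj (MeasurableSet.iUnion hpiece),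
    measureReal_iUnion_fintype hfibres hpiece, hfirst, Finset.mul_sum]
  congr 1
  refine Finset.sum_congr rfl fun y _ => ?_
  rw [hind.measureReal_inter_inter ha.compl (hYbar y) (hP y), mul_assoc]

end

theorem robust_pinball_grad_unbiased_general
    {Ω 𝒳 : Type*} [MeasurableSpace Ω] [MeasurableSpace 𝒳]
    (μ : Measure Ω) [IsProbabilityMeasure μ]
    (K : ℕ) (hK : 1 ≤ K) (ε : ℝ) (hε : ε ∈ Set.Ioo (0:ℝ) 1)
    (X : Ω → 𝒳) (Y : Ω → Fin K) (U : Ω → ℝ) (Ybar : Ω → Fin K)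
    (hX : Measurable X) (hY : Measurable Y) (hU : Measurable U) (hYbar : Measurable Ybar)
    -- U is uniformly distributed on [0,1]
    (hU_unif : Measure.map U μ = volume.restrict (Set.Icc (0:ℝ) 1))
    -- Ȳ is uniformly distributed on {1,…,K}
    (hYbar_unif : ∀ y : Fin K, μ {ω | Ybar ω = y} = (K : ENNReal)⁻¹)
    -- U, Ȳ and the pair (X, Y) are mutually independent
    (hIndep : iIndep
      ![MeasurableSpace.comap U inferInstance,
        MeasurableSpace.comap Ybar inferInstance,
        MeasurableSpace.comap (fun ω => (X ω, Y ω)) inferInstance] μ)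
    -- the score function, measurable with values in [0,1]
    (𝒮 : 𝒳 → Fin K → ℝ) (h𝒮 : ∀ y, Measurable fun x => 𝒮 x y)
    -- the noisy label
    (Ytil : Ω → Fin K) (hYtil : ∀ ω, Ytil ω = if ε ≤ U ω then Y ω else Ybar ω)
    (α τ : ℝ) :
    ∫ ω, ((if 𝒮 (X ω) (Y ω) ≤ τ then (1:ℝ) else 0) - (1 - α)) ∂μ
      = ∫ ω, ((1 / (1 - ε)) * ((if 𝒮 (X ω) (Ytil ω) ≤ τ then (1:ℝ) else 0) - (1 - α))
          - (ε / ((K : ℝ) * (1 - ε)))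
              * ∑ y : Fin K, ((if 𝒮 (X ω) y ≤ τ then (1:ℝ) else 0) - (1 - α))) ∂μ := by
  have hm : ∀ i, ![MeasurableSpace.comap U inferInstance, MeasurableSpace.comap Ybar inferInstance,
      MeasurableSpace.comap (fun ω => (X ω, Y ω)) inferInstance] i ≤ ‹MeasurableSpace Ω› := by
    intro i; fin_cases i
    exacts [hU.comap_le, hYbar.comap_le, (hX.prodMk hY).comap_le]
  have hSy : ∀ y, MeasurableSet[MeasurableSpace.comap (fun ω => (X ω, Y ω)) inferInstance]
      {ω | 𝒮 (X ω) y ≤ τ} := fun y => ⟨_, ((h𝒮 y).comp measurable_fst) measurableSet_Iic, rfl⟩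
  have hS : Measurable fun p : 𝒳 × Fin K => 𝒮 p.1 p.2 := measurable_from_prod_countable_left h𝒮
  have hSY : MeasurableSet[MeasurableSpace.comap (fun ω => (X ω, Y ω)) inferInstance]
      {ω | 𝒮 (X ω) (Y ω) ≤ τ} := ⟨_, hS measurableSet_Iic, rfl⟩
  have hA : MeasurableSet[MeasurableSpace.comap U inferInstance] {ω | ε ≤ U ω} :=
    ⟨Set.Ici ε, measurableSet_Ici, rfl⟩
  have hnoisy : μ.real {ω | 𝒮 (X ω) (Ytil ω) ≤ τ}
      = (1 - ε) * μ.real {ω | 𝒮 (X ω) (Y ω) ≤ τ}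
        + ε * ∑ y, (K : ℝ)⁻¹ * μ.real {ω | 𝒮 (X ω) y ≤ τ} := by
    simp only [hYtil]
    rw [measureReal_setOf_ite_label hm hIndep hA (fun y => ⟨{y}, measurableSet_singleton y, rfl⟩)
      hSy hSY, probReal_compl_eq_one_sub (hm 0 _ hA),
      measureReal_setOf_le_of_map_eq_uniform hU hU_unif (Set.Ioo_subset_Icc_self hε)]
    simp [measureReal_def, hYbar_unif]
  have hYtil_meas : Measurable Ytil := funext hYtil ▸ Measurable.ite (hU measurableSet_Ici) hY hYbar
  have hSYtil : MeasurableSet {ω | 𝒮 (X ω) (Ytil ω) ≤ τ} :=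
    (hS.comp (hX.prodMk hYtil_meas)) measurableSet_Iic
  have hsum_int : ∀ y ∈ Finset.univ,
      Integrable (fun ω => (if 𝒮 (X ω) y ≤ τ then (1:ℝ) else 0) - (1 - α)) μ := fun y _ =>
    integrable_ite_one_zero_sub (hm 2 _ (hSy y)) _
  rw [integral_sub ((integrable_ite_one_zero_sub hSYtil _).const_mul _)
      ((integrable_finsetSum _ hsum_int).const_mul _),
    integral_const_mul, integral_const_mul, integral_finsetSum _ hsum_int,
    integral_ite_one_zero_sub (hm 2 _ hSY), integral_ite_one_zero_sub hSYtil]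
  simp_rw [integral_ite_one_zero_sub (hm 2 _ (hSy _))]
  exact sub_eq_robust_correction (by omega) hε.2.ne _ _ _ _ hnoisy

/-- the robust pinball subgradient is an unbiased estimate of the clean pinball
subgradient under the single-step uniform label noise model. -/
theorem robust_pinball_grad_unbiased
    {Ω 𝒳 : Type*} [MeasurableSpace Ω] [MeasurableSpace 𝒳]
    (μ : Measure Ω) [IsProbabilityMeasure μ]
    (K : ℕ) (hK : 1 ≤ K) (ε : ℝ) (hε : ε ∈ Set.Ioo (0:ℝ) 1)
    (X : Ω → 𝒳) (Y : Ω → Fin K) (U : Ω → ℝ) (Ybar : Ω → Fin K)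
    (hX : Measurable X) (hY : Measurable Y) (hU : Measurable U) (hYbar : Measurable Ybar)
    -- U is uniformly distributed on [0,1]
    (hU_unif : Measure.map U μ = volume.restrict (Set.Icc (0:ℝ) 1))
    -- Ȳ is uniformly distributed on {1,…,K}
    (hYbar_unif : ∀ y : Fin K, μ {ω | Ybar ω = y} = (K : ENNReal)⁻¹)
    -- U, Ȳ and the pair (X, Y) are mutually independent
    (hIndep : iIndep
      ![MeasurableSpace.comap U inferInstance,
        MeasurableSpace.comap Ybar inferInstance,
        MeasurableSpace.comap (fun ω => (X ω, Y ω)) inferInstance] μ)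
    -- the score function, measurable with values in [0,1]
    (𝒮 : 𝒳 → Fin K → ℝ) (h𝒮 : ∀ y, Measurable fun x => 𝒮 x y)
    (h𝒮range : ∀ x y, 𝒮 x y ∈ Set.Icc (0:ℝ) 1)
    -- the noisy label
    (Ytil : Ω → Fin K) (hYtil : ∀ ω, Ytil ω = if ε ≤ U ω then Y ω else Ybar ω)
    (α τ : ℝ) (hα : α ∈ Set.Ioo (0:ℝ) 1) :
    ∫ ω, ((if 𝒮 (X ω) (Y ω) ≤ τ then (1:ℝ) else 0) - (1 - α)) ∂μ
      = ∫ ω, ((1 / (1 - ε)) * ((if 𝒮 (X ω) (Ytil ω) ≤ τ then (1:ℝ) else 0) - (1 - α))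
          - (ε / ((K : ℝ) * (1 - ε)))
              * ∑ y : Fin K, ((if 𝒮 (X ω) y ≤ τ then (1:ℝ) else 0) - (1 - α))) ∂μ :=
  robust_pinball_grad_unbiased_general μ K hK ε hε X Y U Ybar hX hY hU hYbar hU_unif hYbar_unif
    hIndep 𝒮 h𝒮 Ytil hYtil α τ
end

section
/- Let α ∈ (0,1), η > 0, let (s_t)_{t≥1} be an arbitrary sequence in [0,1], let τ_1 ∈ [0,1], and define τ_{t+1} = τ_t − η·(1{s_t ≤ τ_t} − (1−α)) for every t ≥ 1. Then for every t ≥ 1: −αη ≤ τ_t ≤ 1 + (1−α)η. -/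
/-- boundedness of the ACI threshold iterates under constant learning rate. -/
theorem aci_threshold_bounded_constant_lr
    (α η : ℝ) (hα : α ∈ Set.Ioo (0:ℝ) 1) (hη : 0 < η)
    (s : ℕ → ℝ) (hs : ∀ t, 1 ≤ t → s t ∈ Set.Icc (0:ℝ) 1)
    (τ : ℕ → ℝ) (hτ1 : τ 1 ∈ Set.Icc (0:ℝ) 1)
    (hupd : ∀ t, 1 ≤ t →
      τ (t + 1) = τ t - η * ((if s t ≤ τ t then (1:ℝ) else 0) - (1 - α))) :
    ∀ t, 1 ≤ t → -α * η ≤ τ t ∧ τ t ≤ 1 + (1 - α) * η := by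
  obtain ⟨hα0, hα1⟩ := hα
  intro t ht
  induction t with
  | zero => omega
  | succ n ih =>
    rcases Nat.lt_or_ge n 1 with hn | hn
    · interval_cases n
      constructor
      · nlinarith [hτ1.1]
      · nlinarith [hτ1.2]
    · obtain ⟨ihl, ihr⟩ := ih hn
      have hup := hupd n hn
      obtain ⟨hs0, hs1⟩ := hs n hn
      by_cases h : s n ≤ τ n
      · rw [hup, if_pos h]
        constructor
        · nlinarith
        · nlinarith
      · rw [hup, if_neg h]
        constructor
        · nlinarith
        · nlinarith
end

section
/- Let α ∈ (0,1), ε ∈ (0,1), K ∈ ℕ with K ≥ 1, η > 0, let (s̃_t)_{t≥1} and (s_{t,y})_{t≥1, 1≤y≤K} be arbitrary sequences in [0,1], let τ_1 ∈ [0,1], and define τ_{t+1} = τ_t − η·g̃(τ_t, s̃_t, (s_{t,y})_{y=1}^K) for every t ≥ 1. Then for every t ≥ 1: −αη − εη/(1−ε) ≤ τ_t ≤ 1 − αη + η/(1−ε). -/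
/-!
Write `r(x) = 1{x ≤ τ} − (1 − α) ∈ [α − 1, α]` for the pinball subgradient and `c = ε/(1−ε)`.
The robust subgradient is `r(s̃) + c·(r(s̃) − mean_y r(s_y))`, so it lies in `[α − 1 − c, α + c]`, is
`≥ α ≥ 0` as soon as `s̃ ≤ τ` and `≤ α − 1 ≤ 0` as soon as `τ < s̃`. Hence a step from `τ ∈ [0, 1]`
moves by at most `η(α + c)` down or `η(1 − α + c)` up, and from outside `[0, 1]` the step points back
towards `[0, 1]`: the interval `[−η(α + c), 1 + η(1 − α + c)]` is invariant.
-/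

/-- The robust pinball subgradient. -/
noncomputable def robustGrad (α ε : ℝ) (K : ℕ) (τ stil : ℝ) (s : Fin K → ℝ) : ℝ :=
  (1 / (1 - ε)) * ((if stil ≤ τ then (1:ℝ) else 0) - (1 - α))
    - (ε / ((K : ℝ) * (1 - ε))) * ∑ y : Fin K, ((if s y ≤ τ then (1:ℝ) else 0) - (1 - α))

open Set
open scoped BigOperators

noncomputable def pinballGrad (α τ x : ℝ) : ℝ :=
  (if x ≤ τ then 1 else 0) - (1 - α)

lemma pinballGrad_mem_Icc (α τ x : ℝ) : pinballGrad α τ x ∈ Icc (α - 1) α := by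
  unfold pinballGrad
  split_ifs <;> constructor <;> linarith

lemma pinballGrad_of_le {α τ x : ℝ} (h : x ≤ τ) : pinballGrad α τ x = α := by
  simp [pinballGrad, h]

lemma pinballGrad_of_lt {α τ x : ℝ} (h : τ < x) : pinballGrad α τ x = α - 1 := by
  simp [pinballGrad, not_le.mpr h]

lemma expect_pinballGrad_mem_Icc {K : ℕ} [NeZero K] (α τ : ℝ) (s : Fin K → ℝ) :
    𝔼 y, pinballGrad α τ (s y) ∈ Icc (α - 1) α :=
  ⟨Finset.le_expect Finset.univ_nonempty fun y _ ↦ (pinballGrad_mem_Icc α τ (s y)).1,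
    Finset.expect_le Finset.univ_nonempty fun y _ ↦ (pinballGrad_mem_Icc α τ (s y)).2⟩

section robustGrad

variable {α ε : ℝ} {K : ℕ} [NeZero K] {τ stil : ℝ} {s : Fin K → ℝ}

lemma robustGrad_eq_add (hε : ε ≠ 1) :
    robustGrad α ε K τ stil s = pinballGrad α τ stil
      + ε / (1 - ε) * (pinballGrad α τ stil - 𝔼 y, pinballGrad α τ (s y)) := by
  have h1ε : 1 - ε ≠ 0 := sub_ne_zero.mpr hε.symm
  have hK : (K : ℝ) ≠ 0 := NeZero.ne _
  rw [Fintype.expect_eq_sum_div_card, Fintype.card_fin, robustGrad]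
  simp only [pinballGrad]
  field_simp
  ring

lemma robustGrad_le (hε₀ : 0 ≤ ε) (hε₁ : ε < 1) :
    robustGrad α ε K τ stil s ≤ α + ε / (1 - ε) := by
  have hc : 0 ≤ ε / (1 - ε) := div_nonneg hε₀ (sub_nonneg.mpr hε₁.le)
  obtain ⟨ha₀, ha₁⟩ := pinballGrad_mem_Icc α τ stil
  obtain ⟨hm₀, hm₁⟩ := expect_pinballGrad_mem_Icc (K := K) α τ s
  rw [robustGrad_eq_add hε₁.ne]
  nlinarith

lemma le_robustGrad (hε₀ : 0 ≤ ε) (hε₁ : ε < 1) :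
    α - 1 / (1 - ε) ≤ robustGrad α ε K τ stil s := by
  have hc : 0 ≤ ε / (1 - ε) := div_nonneg hε₀ (sub_nonneg.mpr hε₁.le)
  have h1ε : 1 - ε ≠ 0 := sub_ne_zero.mpr hε₁.ne.symm
  have hsplit : α - 1 / (1 - ε) = α - 1 - ε / (1 - ε) := by field_simp; ring
  obtain ⟨ha₀, ha₁⟩ := pinballGrad_mem_Icc α τ stil
  obtain ⟨hm₀, hm₁⟩ := expect_pinballGrad_mem_Icc (K := K) α τ s
  rw [robustGrad_eq_add hε₁.ne, hsplit]
  nlinarith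

lemma le_robustGrad_of_le (hε₀ : 0 ≤ ε) (hε₁ : ε < 1) (h : stil ≤ τ) :
    α ≤ robustGrad α ε K τ stil s := by
  have hc : 0 ≤ ε / (1 - ε) := div_nonneg hε₀ (sub_nonneg.mpr hε₁.le)
  have hm := (expect_pinballGrad_mem_Icc (K := K) α τ s).2
  rw [robustGrad_eq_add hε₁.ne, pinballGrad_of_le h]
  nlinarith

lemma robustGrad_le_of_lt (hε₀ : 0 ≤ ε) (hε₁ : ε < 1) (h : τ < stil) :
    robustGrad α ε K τ stil s ≤ α - 1 := by
  have hc : 0 ≤ ε / (1 - ε) := div_nonneg hε₀ (sub_nonneg.mpr hε₁.le)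
  have hm := (expect_pinballGrad_mem_Icc (K := K) α τ s).1
  rw [robustGrad_eq_add hε₁.ne, pinballGrad_of_lt h]
  nlinarith

end robustGrad

section iterate

variable {η a b : ℝ}

lemma sub_mul_mem_Icc_of_restoring (hη : 0 ≤ η) {τ g : ℝ}
    (hτ : τ ∈ Icc (-η * b) (1 - η * a)) (hg : g ∈ Icc a b)
    (hg_nonpos : τ < 0 → g ≤ 0) (hg_nonneg : 1 < τ → 0 ≤ g) :
    τ - η * g ∈ Icc (-η * b) (1 - η * a) := by
  obtain ⟨hga, hgb⟩ := hg
  constructor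
  · rcases lt_or_ge τ 0 with hτ0 | hτ0
    · nlinarith [hτ.1, hg_nonpos hτ0]
    · nlinarith
  · rcases lt_or_ge 1 τ with hτ1 | hτ1
    · nlinarith [hτ.2, hg_nonneg hτ1]
    · nlinarith

lemma iterate_mem_Icc_of_restoring (hη : 0 ≤ η) (ha : a ≤ 0) (hb : 0 ≤ b) {τ g : ℕ → ℝ}
    (hτ1 : τ 1 ∈ Icc 0 1) (hupd : ∀ t, 1 ≤ t → τ (t + 1) = τ t - η * g t)
    (hg : ∀ t, 1 ≤ t → g t ∈ Icc a b)
    (hg_nonpos : ∀ t, 1 ≤ t → τ t < 0 → g t ≤ 0)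
    (hg_nonneg : ∀ t, 1 ≤ t → 1 < τ t → 0 ≤ g t) :
    ∀ t, 1 ≤ t → τ t ∈ Icc (-η * b) (1 - η * a) := by
  intro t ht
  induction t, ht using Nat.le_induction with
  | base => exact ⟨by nlinarith [hτ1.1], by nlinarith [hτ1.2]⟩
  | succ t ht ih =>
    rw [hupd t ht]
    exact sub_mul_mem_Icc_of_restoring hη ih (hg t ht) (hg_nonpos t ht) (hg_nonneg t ht)

end iterate

theorem nrocp_threshold_bounded_constant_lr_general
    (α ε : ℝ) (hα : α ∈ Set.Ioo (0:ℝ) 1) (hε : ε ∈ Set.Ioo (0:ℝ) 1)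
    (K : ℕ) (hK : 1 ≤ K) (η : ℝ) (hη : 0 < η)
    (stil : ℕ → ℝ) (hstil : ∀ t, 1 ≤ t → stil t ∈ Set.Icc (0:ℝ) 1)
    (s : ℕ → Fin K → ℝ)
    (τ : ℕ → ℝ) (hτ1 : τ 1 ∈ Set.Icc (0:ℝ) 1)
    (hupd : ∀ t, 1 ≤ t → τ (t + 1) = τ t - η * robustGrad α ε K (τ t) (stil t) (s t)) :
    ∀ t, 1 ≤ t →
      -α * η - ε * η / (1 - ε) ≤ τ t ∧ τ t ≤ 1 - α * η + η / (1 - ε) := by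
  obtain ⟨hα₀, hα₁⟩ := hα
  obtain ⟨hε₀, hε₁⟩ := hε
  have : NeZero K := ⟨by omega⟩
  have ha : α - 1 / (1 - ε) ≤ 0 := by
    linarith [one_le_one_div (sub_pos.mpr hε₁) (by linarith : 1 - ε ≤ 1)]
  have hb : 0 ≤ α + ε / (1 - ε) := add_nonneg hα₀.le (div_nonneg hε₀.le (by linarith))
  intro t ht
  obtain ⟨hlow, hupp⟩ := iterate_mem_Icc_of_restoring hη.le ha hb hτ1 hupd
    (fun t _ ↦ ⟨le_robustGrad hε₀.le hε₁, robustGrad_le hε₀.le hε₁⟩)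
    (fun t ht hτt ↦ (robustGrad_le_of_lt hε₀.le hε₁
      (hτt.trans_le (hstil t ht).1)).trans (by linarith))
    (fun t ht hτt ↦ hα₀.le.trans (le_robustGrad_of_le hε₀.le hε₁
      ((hstil t ht).2.trans hτt.le)))
    t ht
  exact ⟨Eq.trans_le (by ring) hlow, hupp.trans_eq (by ring)⟩

/-- boundedness of the NR-OCP threshold iterates under constant learning rate. -/
theorem nrocp_threshold_bounded_constant_lr
    (α ε : ℝ) (hα : α ∈ Set.Ioo (0:ℝ) 1) (hε : ε ∈ Set.Ioo (0:ℝ) 1)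
    (K : ℕ) (hK : 1 ≤ K) (η : ℝ) (hη : 0 < η)
    (stil : ℕ → ℝ) (hstil : ∀ t, 1 ≤ t → stil t ∈ Set.Icc (0:ℝ) 1)
    (s : ℕ → Fin K → ℝ) (hs : ∀ t, 1 ≤ t → ∀ y, s t y ∈ Set.Icc (0:ℝ) 1)
    (τ : ℕ → ℝ) (hτ1 : τ 1 ∈ Set.Icc (0:ℝ) 1)
    (hupd : ∀ t, 1 ≤ t → τ (t + 1) = τ t - η * robustGrad α ε K (τ t) (stil t) (s t)) :
    ∀ t, 1 ≤ t →
      -α * η - ε * η / (1 - ε) ≤ τ t ∧ τ t ≤ 1 - α * η + η / (1 - ε) :=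
  nrocp_threshold_bounded_constant_lr_general α ε hα hε K hK η hη stil hstil s τ hτ1 hupd
end

section
/- Under the single-step uniform label noise model with noise rate ε ∈ (0,1), for every s ∈ ℝ the cumulative distribution functions satisfy P(S ≤ s) = (1/(1−ε))·P(S̃ ≤ s) − (ε/(K(1−ε)))·Σ_{y=1}^K P(S_y ≤ s); equivalently, P(S̃ ≤ s) = (1−ε)·P(S ≤ s) + (ε/K)·Σ_{y=1}^K P(S_y ≤ s). -/
open MeasureTheory ProbabilityTheory

/-- relation between the CDFs of the clean score, the noisy score, and the
per-class scores under the single-step uniform label noise model. -/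
theorem noisy_score_cdf_relation
    {Ω 𝒳 : Type*} [MeasurableSpace Ω] [MeasurableSpace 𝒳]
    (μ : Measure Ω) [IsProbabilityMeasure μ]
    (K : ℕ) (hK : 1 ≤ K) (ε : ℝ) (hε : ε ∈ Set.Ioo (0:ℝ) 1)
    (X : Ω → 𝒳) (Y : Ω → Fin K) (U : Ω → ℝ) (Ybar : Ω → Fin K)
    (hX : Measurable X) (hY : Measurable Y) (hU : Measurable U) (hYbar : Measurable Ybar)
    -- U is uniformly distributed on [0,1]
    (hU_unif : Measure.map U μ = volume.restrict (Set.Icc (0:ℝ) 1))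
    -- Ȳ is uniformly distributed on {1,…,K}
    (hYbar_unif : ∀ y : Fin K, μ {ω | Ybar ω = y} = (K : ENNReal)⁻¹)
    -- U, Ȳ and the pair (X, Y) are mutually independent
    (hIndep : iIndep
      ![MeasurableSpace.comap U inferInstance,
        MeasurableSpace.comap Ybar inferInstance,
        MeasurableSpace.comap (fun ω => (X ω, Y ω)) inferInstance] μ)
    -- the score function, measurable with values in [0,1]
    (𝒮 : 𝒳 → Fin K → ℝ) (h𝒮 : ∀ y, Measurable fun x => 𝒮 x y)
    (h𝒮range : ∀ x y, 𝒮 x y ∈ Set.Icc (0:ℝ) 1)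
    -- the noisy label
    (Ytil : Ω → Fin K) (hYtil : ∀ ω, Ytil ω = if ε ≤ U ω then Y ω else Ybar ω)
    (s : ℝ) :
    (μ {ω | 𝒮 (X ω) (Y ω) ≤ s}).toReal
        = (1 / (1 - ε)) * (μ {ω | 𝒮 (X ω) (Ytil ω) ≤ s}).toReal
          - (ε / ((K : ℝ) * (1 - ε))) * ∑ y : Fin K, (μ {ω | 𝒮 (X ω) y ≤ s}).toReal ∧
      (μ {ω | 𝒮 (X ω) (Ytil ω) ≤ s}).toReal
        = (1 - ε) * (μ {ω | 𝒮 (X ω) (Y ω) ≤ s}).toReal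
          + (ε / (K : ℝ)) * ∑ y : Fin K, (μ {ω | 𝒮 (X ω) y ≤ s}).toReal := by
  obtain ⟨hε0, hε1⟩ := hε
  have hKpos : (0:ℝ) < K := by exact_mod_cast hK
  -- basic sets
  set XY : Ω → 𝒳 × Fin K := fun ω => (X ω, Y ω) with hXY
  have hXYm : Measurable XY := hX.prodMk hY
  have hSm : Measurable fun p : 𝒳 × Fin K => 𝒮 p.1 p.2 :=
    measurable_from_prod_countable_left h𝒮
  set A : Set Ω := U ⁻¹' Set.Ici ε with hA
  set C : Set Ω := XY ⁻¹' {p : 𝒳 × Fin K | 𝒮 p.1 p.2 ≤ s} with hC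
  have hCset : MeasurableSet {p : 𝒳 × Fin K | 𝒮 p.1 p.2 ≤ s} :=
    hSm measurableSet_Iic
  have hCm : MeasurableSet C := hXYm hCset
  have hAm : MeasurableSet A := hU measurableSet_Ici
  -- C is the clean score event
  have hCeq : C = {ω | 𝒮 (X ω) (Y ω) ≤ s} := rfl
  -- per class events
  set Cy : Fin K → Set Ω := fun y => X ⁻¹' {x | 𝒮 x y ≤ s} with hCy
  have hCyeq : ∀ y, Cy y = {ω | 𝒮 (X ω) y ≤ s} := fun y => rfl
  have hCym : ∀ y, MeasurableSet (Cy y) := fun y => hX ((h𝒮 y) measurableSet_Iic)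
  -- measure of A
  have hμA : μ A = ENNReal.ofReal (1 - ε) := by
    rw [hA, ← Measure.map_apply hU measurableSet_Ici, hU_unif,
      Measure.restrict_apply measurableSet_Ici]
    have : Set.Ici ε ∩ Set.Icc (0:ℝ) 1 = Set.Icc ε 1 := by
      ext t
      simp only [Set.mem_inter_iff, Set.mem_Ici, Set.mem_Icc]
      constructor
      · rintro ⟨h1, _, h3⟩; exact ⟨h1, h3⟩
      · rintro ⟨h1, h2⟩; exact ⟨h1, le_of_lt (lt_of_lt_of_le hε0 h1), h2⟩
    rw [this, Real.volume_Icc]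
  have hμAc : μ Aᶜ = ENNReal.ofReal ε := by
    rw [measure_compl hAm (measure_ne_top μ A), hμA, measure_univ]
    rw [← ENNReal.ofReal_one, ← ENNReal.ofReal_sub _ (by linarith)]
    norm_num
  -- independence: μ (A ∩ C) = μ A * μ C
  have hAC : μ (A ∩ C) = μ A * μ C := by
    have := hIndep.meas_iInter (s := ![A, Set.univ, C]) ?_
    · have hI : (⋂ i, ![A, Set.univ, C] i) = A ∩ C := by
        ext ω
        simp [Fin.forall_fin_succ, Set.mem_inter_iff]
      rw [hI] at this
      rw [this, Fin.prod_univ_three]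
      simp
    · intro i
      fin_cases i
      · exact ⟨Set.Ici ε, measurableSet_Ici, rfl⟩
      · exact ⟨Set.univ, MeasurableSet.univ, by simp⟩
      · exact ⟨{p : 𝒳 × Fin K | 𝒮 p.1 p.2 ≤ s}, hCset, rfl⟩
  -- independence: triple products
  have hTriple : ∀ y : Fin K,
      μ (Aᶜ ∩ (Ybar ⁻¹' {y} ∩ Cy y)) = ENNReal.ofReal ε * ((K : ENNReal)⁻¹ * μ (Cy y)) := by
    intro y
    have hmy : μ (Ybar ⁻¹' {y}) = (K : ENNReal)⁻¹ := hYbar_unif y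
    have := hIndep.meas_iInter
      (s := ![U ⁻¹' Set.Iio ε, Ybar ⁻¹' {y}, XY ⁻¹' ({x | 𝒮 x y ≤ s} ×ˢ Set.univ)]) ?_
    · have hI : (⋂ i, ![U ⁻¹' Set.Iio ε, Ybar ⁻¹' {y},
          XY ⁻¹' ({x | 𝒮 x y ≤ s} ×ˢ Set.univ)] i) = Aᶜ ∩ (Ybar ⁻¹' {y} ∩ Cy y) := by
        ext ω
        simp [Fin.forall_fin_succ, hA, hCy, hXY, Set.mem_Iio, not_le, and_assoc]
      have hAc' : μ (U ⁻¹' Set.Iio ε) = ENNReal.ofReal ε := by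
        have : U ⁻¹' Set.Iio ε = Aᶜ := by rw [hA, ← Set.preimage_compl, Set.compl_Ici]
        rw [this, hμAc]
      have hC' : XY ⁻¹' ({x | 𝒮 x y ≤ s} ×ˢ Set.univ) = Cy y := by
        ext ω; simp [hXY, hCy]
      rw [hI] at this
      rw [this, Fin.prod_univ_three]
      simp only [Matrix.cons_val_zero, Matrix.cons_val_one, Matrix.head_cons,
        Matrix.cons_val_two, Matrix.tail_cons]
      rw [hAc', hmy, hC', mul_assoc]
    · intro i
      fin_cases i
      · exact ⟨Set.Iio ε, measurableSet_Iio, rfl⟩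
      · exact ⟨{y}, MeasurableSet.singleton y, rfl⟩
      · exact ⟨{x | 𝒮 x y ≤ s} ×ˢ Set.univ,
          ((h𝒮 y) measurableSet_Iic).prod MeasurableSet.univ, rfl⟩
  -- decomposition of the noisy event
  set D : Set Ω := {ω | 𝒮 (X ω) (Ybar ω) ≤ s} with hD
  have hTdecomp : {ω | 𝒮 (X ω) (Ytil ω) ≤ s} = (A ∩ C) ∪ (Aᶜ ∩ D) := by
    ext ω
    rw [Set.mem_setOf_eq, hYtil ω]
    by_cases h : ε ≤ U ω
    · simp [h, hA, hC, hXY]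
    · simp [h, hA, hC, hD, not_le.mp h]
  have hDdecomp : Aᶜ ∩ D = ⋃ y : Fin K, Aᶜ ∩ (Ybar ⁻¹' {y} ∩ Cy y) := by
    ext ω
    simp only [Set.mem_inter_iff, Set.mem_iUnion, hD, Set.mem_setOf_eq,
      Set.mem_preimage, Set.mem_singleton_iff, hCy]
    constructor
    · rintro ⟨h1, h2⟩; exact ⟨Ybar ω, h1, rfl, h2⟩
    · rintro ⟨y, h1, rfl, h2⟩; exact ⟨h1, h2⟩
  have hmeas_piece : ∀ y : Fin K, MeasurableSet (Aᶜ ∩ (Ybar ⁻¹' {y} ∩ Cy y)) :=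
    fun y => hAm.compl.inter ((hYbar (MeasurableSet.singleton y)).inter (hCym y))
  -- the main ENNReal identity
  have hMain : μ {ω | 𝒮 (X ω) (Ytil ω) ≤ s}
      = ENNReal.ofReal (1 - ε) * μ C
        + ∑ y : Fin K, ENNReal.ofReal ε * ((K : ENNReal)⁻¹ * μ (Cy y)) := by
    rw [hTdecomp]
    rw [measure_union ?_ ?_]
    · congr 1
      · rw [hAC, hμA]
      · rw [hDdecomp, measure_iUnion ?_ hmeas_piece]
        · rw [tsum_fintype]
          exact Finset.sum_congr rfl fun y _ => hTriple y
        · intro y y' hyy'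
          apply Set.disjoint_left.mpr
          rintro ω ⟨_, hy, _⟩ ⟨_, hy', _⟩
          exact hyy' (hy.symm.trans hy')
    · exact Set.disjoint_of_subset Set.inter_subset_left Set.inter_subset_left
        disjoint_compl_right
    · rw [hDdecomp]
      exact MeasurableSet.iUnion hmeas_piece
  -- pass to real numbers
  have hfin : ∀ t : Set Ω, μ t ≠ ⊤ := fun t => measure_ne_top μ t
  have hMainR : (μ {ω | 𝒮 (X ω) (Ytil ω) ≤ s}).toReal
      = (1 - ε) * (μ {ω | 𝒮 (X ω) (Y ω) ≤ s}).toReal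
        + (ε / (K : ℝ)) * ∑ y : Fin K, (μ {ω | 𝒮 (X ω) y ≤ s}).toReal := by
    rw [hMain, ENNReal.toReal_add, ENNReal.toReal_mul, ENNReal.toReal_ofReal (by linarith)]
    · congr 1
      rw [ENNReal.toReal_sum (fun y _ => ?_)]
      · rw [Finset.mul_sum]
        refine Finset.sum_congr rfl fun y _ => ?_
        rw [hCyeq y, ENNReal.toReal_mul, ENNReal.toReal_mul, ENNReal.toReal_ofReal hε0.le,
          ENNReal.toReal_inv, ENNReal.toReal_natCast]
        ring
      · exact ENNReal.mul_ne_top ENNReal.ofReal_ne_top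
          (ENNReal.mul_ne_top (by simp; omega) (hfin _))
    · exact ENNReal.mul_ne_top ENNReal.ofReal_ne_top (hfin _)
    · exact ENNReal.sum_ne_top.mpr fun y _ => ENNReal.mul_ne_top ENNReal.ofReal_ne_top
        (ENNReal.mul_ne_top (by simp; omega) (hfin _))
  refine ⟨?_, hMainR⟩
  have h1ε : (1:ℝ) - ε ≠ 0 := by linarith
  have hK0 : (K:ℝ) ≠ 0 := ne_of_gt hKpos
  rw [hMainR]
  field_simp
  ring
end

section
/- Under the single-step uniform label noise model with noise rate ε ∈ (0,1), for every s ∈ ℝ: (i) P(S = s) = (1/(1−ε))·P(S̃ = s) − (ε/(K(1−ε)))·Σ_{y=1}^K P(S_y = s), and (ii) P(S > s) = (1/(1−ε))·P(S̃ > s) − (ε/(K(1−ε)))·Σ_{y=1}^K P(S_y > s). -/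
open MeasureTheory ProbabilityTheory

/-- relations between the point masses and the tail probabilities of the clean
score, the noisy score, and the per-class scores under the single-step uniform label noise
model. -/
theorem noisy_score_pmf_and_tail_relation
    {Ω 𝒳 : Type*} [MeasurableSpace Ω] [MeasurableSpace 𝒳]
    (μ : Measure Ω) [IsProbabilityMeasure μ]
    (K : ℕ) (hK : 1 ≤ K) (ε : ℝ) (hε : ε ∈ Set.Ioo (0:ℝ) 1)
    (X : Ω → 𝒳) (Y : Ω → Fin K) (U : Ω → ℝ) (Ybar : Ω → Fin K)
    (hX : Measurable X) (hY : Measurable Y) (hU : Measurable U) (hYbar : Measurable Ybar)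
    -- U is uniformly distributed on [0,1]
    (hU_unif : Measure.map U μ = volume.restrict (Set.Icc (0:ℝ) 1))
    -- Ȳ is uniformly distributed on {1,…,K}
    (hYbar_unif : ∀ y : Fin K, μ {ω | Ybar ω = y} = (K : ENNReal)⁻¹)
    -- U, Ȳ and the pair (X, Y) are mutually independent
    (hIndep : iIndep
      ![MeasurableSpace.comap U inferInstance,
        MeasurableSpace.comap Ybar inferInstance,
        MeasurableSpace.comap (fun ω => (X ω, Y ω)) inferInstance] μ)
    -- the score function, measurable with values in [0,1]
    (𝒮 : 𝒳 → Fin K → ℝ) (h𝒮 : ∀ y, Measurable fun x => 𝒮 x y)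
    (h𝒮range : ∀ x y, 𝒮 x y ∈ Set.Icc (0:ℝ) 1)
    -- the noisy label
    (Ytil : Ω → Fin K) (hYtil : ∀ ω, Ytil ω = if ε ≤ U ω then Y ω else Ybar ω)
    (s : ℝ) :
    (μ {ω | 𝒮 (X ω) (Y ω) = s}).toReal
        = (1 / (1 - ε)) * (μ {ω | 𝒮 (X ω) (Ytil ω) = s}).toReal
          - (ε / ((K : ℝ) * (1 - ε))) * ∑ y : Fin K, (μ {ω | 𝒮 (X ω) y = s}).toReal ∧
      (μ {ω | s < 𝒮 (X ω) (Y ω)}).toReal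
        = (1 / (1 - ε)) * (μ {ω | s < 𝒮 (X ω) (Ytil ω)}).toReal
          - (ε / ((K : ℝ) * (1 - ε))) * ∑ y : Fin K, (μ {ω | s < 𝒮 (X ω) y}).toReal := by
  obtain ⟨hε0, hε1⟩ := hε
  have hK0 : (K : ℝ) ≠ 0 := by positivity
  have h1ε : (1 : ℝ) - ε ≠ 0 := by linarith
  have hXY : Measurable fun ω => (X ω, Y ω) := hX.prodMk hY
  -- measure of the U events
  have hUlt : μ {ω | U ω < ε} = ENNReal.ofReal ε := by
    have : {ω | U ω < ε} = U ⁻¹' Set.Iio ε := rfl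
    rw [this, ← Measure.map_apply hU measurableSet_Iio, hU_unif,
      Measure.restrict_apply measurableSet_Iio]
    have : Set.Iio ε ∩ Set.Icc (0:ℝ) 1 = Set.Ico 0 ε := by
      ext x; simp only [Set.mem_inter_iff, Set.mem_Iio, Set.mem_Icc, Set.mem_Ico]
      constructor
      · rintro ⟨h1, h2, h3⟩; exact ⟨h2, h1⟩
      · rintro ⟨h1, h2⟩; exact ⟨h2, h1, by linarith⟩
    rw [this, Real.volume_Ico, sub_zero]
  have hUge : μ {ω | ε ≤ U ω} = ENNReal.ofReal (1 - ε) := by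
    have : {ω | ε ≤ U ω} = U ⁻¹' Set.Ici ε := rfl
    rw [this, ← Measure.map_apply hU measurableSet_Ici, hU_unif,
      Measure.restrict_apply measurableSet_Ici]
    have : Set.Ici ε ∩ Set.Icc (0:ℝ) 1 = Set.Icc ε 1 := by
      ext x; simp only [Set.mem_inter_iff, Set.mem_Ici, Set.mem_Icc]
      constructor
      · rintro ⟨h1, h2, h3⟩; exact ⟨h1, h3⟩
      · rintro ⟨h1, h2⟩; exact ⟨h1, by linarith, h2⟩
    rw [this, Real.volume_Icc]
  -- main decomposition lemma
  have key : ∀ A' : Set ℝ, MeasurableSet A' →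
      μ {ω | 𝒮 (X ω) (Ytil ω) ∈ A'}
        = ENNReal.ofReal (1 - ε) * μ {ω | 𝒮 (X ω) (Y ω) ∈ A'}
          + (ENNReal.ofReal ε * (K : ENNReal)⁻¹) * ∑ y : Fin K, μ {ω | 𝒮 (X ω) y ∈ A'} := by
    intro A' hA'
    -- measurable sets in 𝒳 × Fin K
    have hCset : MeasurableSet {p : 𝒳 × Fin K | 𝒮 p.1 p.2 ∈ A'} := by
      have : {p : 𝒳 × Fin K | 𝒮 p.1 p.2 ∈ A'}
          = ⋃ y : Fin K, ((fun x => 𝒮 x y) ⁻¹' A') ×ˢ ({y} : Set (Fin K)) := by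
        ext ⟨x, y⟩
        simp only [Set.mem_setOf_eq, Set.mem_iUnion, Set.mem_prod, Set.mem_preimage,
          Set.mem_singleton_iff]
        exact ⟨fun h => ⟨y, h, rfl⟩, fun ⟨i, h, hi⟩ => hi ▸ h⟩
      rw [this]
      exact MeasurableSet.iUnion fun y => ((h𝒮 y) hA').prod (measurableSet_singleton y)
    have hCyset : ∀ y : Fin K, MeasurableSet {p : 𝒳 × Fin K | 𝒮 p.1 y ∈ A'} := by
      intro y
      exact measurable_fst ((h𝒮 y) hA')
    -- comap-measurability facts
    have hm0lt : MeasurableSet[MeasurableSpace.comap U inferInstance] {ω | U ω < ε} :=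
      ⟨Set.Iio ε, measurableSet_Iio, rfl⟩
    have hm0ge : MeasurableSet[MeasurableSpace.comap U inferInstance] {ω | ε ≤ U ω} :=
      ⟨Set.Ici ε, measurableSet_Ici, rfl⟩
    have hm1 : ∀ y : Fin K, MeasurableSet[MeasurableSpace.comap Ybar inferInstance]
        {ω | Ybar ω = y} := fun y => ⟨{y}, measurableSet_singleton y, rfl⟩
    have hm2 : MeasurableSet[MeasurableSpace.comap (fun ω => (X ω, Y ω)) inferInstance]
        {ω | 𝒮 (X ω) (Y ω) ∈ A'} := ⟨{p : 𝒳 × Fin K | 𝒮 p.1 p.2 ∈ A'}, hCset, rfl⟩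
    have hm2y : ∀ y : Fin K, MeasurableSet[MeasurableSpace.comap
        (fun ω => (X ω, Y ω)) inferInstance] {ω | 𝒮 (X ω) y ∈ A'} :=
      fun y => ⟨{p : 𝒳 × Fin K | 𝒮 p.1 y ∈ A'}, hCyset y, rfl⟩
    -- measurability in Ω
    have hmeasC : MeasurableSet {ω | 𝒮 (X ω) (Y ω) ∈ A'} := hXY hCset
    have hmeasCy : ∀ y : Fin K, MeasurableSet {ω | 𝒮 (X ω) y ∈ A'} :=
      fun y => (h𝒮 y).comp hX hA'
    have hmeasUlt : MeasurableSet {ω | U ω < ε} := hU measurableSet_Iio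
    have hmeasUge : MeasurableSet {ω | ε ≤ U ω} := hU measurableSet_Ici
    have hmeasYb : ∀ y : Fin K, MeasurableSet {ω | Ybar ω = y} :=
      fun y => hYbar (measurableSet_singleton y)
    -- decomposition of the noisy-score event
    have hdecomp : {ω | 𝒮 (X ω) (Ytil ω) ∈ A'}
        = ({ω | ε ≤ U ω} ∩ {ω | 𝒮 (X ω) (Y ω) ∈ A'})
          ∪ ⋃ y : Fin K, ({ω | U ω < ε} ∩ {ω | Ybar ω = y} ∩ {ω | 𝒮 (X ω) y ∈ A'}) := by
      ext ω
      simp only [Set.mem_setOf_eq, Set.mem_union, Set.mem_inter_iff, Set.mem_iUnion, hYtil ω]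
      by_cases h : ε ≤ U ω
      · simp [h, not_lt.2 h]
      · simp only [h, if_false]
        constructor
        · intro hmem
          exact Or.inr ⟨Ybar ω, ⟨⟨not_le.1 h, rfl⟩, hmem⟩⟩
        · rintro (⟨h1, _⟩ | ⟨y, ⟨⟨_, hy⟩, hmem⟩⟩)
          · exact h1.elim
          · rwa [hy]
    -- independence computations
    have hpair : μ ({ω | ε ≤ U ω} ∩ {ω | 𝒮 (X ω) (Y ω) ∈ A'})
        = μ {ω | ε ≤ U ω} * μ {ω | 𝒮 (X ω) (Y ω) ∈ A'} := by
      have := hIndep.meas_biInter (S := ({0, 2} : Finset (Fin 3)))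
        (s := ![{ω | ε ≤ U ω}, ∅, {ω | 𝒮 (X ω) (Y ω) ∈ A'}]) ?_
      · simpa using this
      · intro i hi
        fin_cases hi
        · exact hm0ge
        · exact hm2
    have htriple : ∀ y : Fin K,
        μ ({ω | U ω < ε} ∩ {ω | Ybar ω = y} ∩ {ω | 𝒮 (X ω) y ∈ A'})
          = μ {ω | U ω < ε} * μ {ω | Ybar ω = y} * μ {ω | 𝒮 (X ω) y ∈ A'} := by
      intro y
      have := hIndep.meas_biInter (S := (Finset.univ : Finset (Fin 3)))
        (s := ![{ω | U ω < ε}, {ω | Ybar ω = y}, {ω | 𝒮 (X ω) y ∈ A'}]) ?_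
      · have heq : ⋂ i ∈ (Finset.univ : Finset (Fin 3)),
            ![{ω | U ω < ε}, {ω | Ybar ω = y}, {ω | 𝒮 (X ω) y ∈ A'}] i
            = {ω | U ω < ε} ∩ {ω | Ybar ω = y} ∩ {ω | 𝒮 (X ω) y ∈ A'} := by
          ext ω
          simp [Fin.forall_fin_succ, and_assoc]
        rw [heq] at this
        rw [this, Fin.prod_univ_three]
        simp
      · intro i hi
        fin_cases hi
        · exact hm0lt
        · exact hm1 y
        · exact hm2y y
    -- disjointness
    have hdisj2 : Pairwise (Function.onFun Disjoint
        fun y : Fin K => {ω | U ω < ε} ∩ {ω | Ybar ω = y} ∩ {ω | 𝒮 (X ω) y ∈ A'}) := by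
      intro y z hyz
      apply Set.disjoint_left.2
      rintro ω ⟨⟨_, h1⟩, _⟩ ⟨⟨_, h2⟩, _⟩
      exact hyz (h1 ▸ h2 ▸ rfl)
    have hmeasI : ∀ y : Fin K,
        MeasurableSet ({ω | U ω < ε} ∩ {ω | Ybar ω = y} ∩ {ω | 𝒮 (X ω) y ∈ A'}) :=
      fun y => ((hmeasUlt.inter (hmeasYb y)).inter (hmeasCy y))
    have hdisj1 : Disjoint ({ω | ε ≤ U ω} ∩ {ω | 𝒮 (X ω) (Y ω) ∈ A'})
        (⋃ y : Fin K, ({ω | U ω < ε} ∩ {ω | Ybar ω = y} ∩ {ω | 𝒮 (X ω) y ∈ A'})) := by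
      apply Set.disjoint_left.2
      rintro ω ⟨h1, _⟩ hω
      simp only [Set.mem_iUnion] at hω
      obtain ⟨y, ⟨⟨h2, _⟩, _⟩⟩ := hω
      simp only [Set.mem_setOf_eq] at h1 h2
      linarith
    rw [hdecomp, measure_union hdisj1 (MeasurableSet.iUnion hmeasI),
      measure_iUnion hdisj2 hmeasI, hpair, hUge]
    congr 1
    rw [tsum_fintype, Finset.mul_sum]
    refine Finset.sum_congr rfl fun y _ => ?_
    rw [htriple y, hYbar_unif y, hUlt]
  -- from the ENNReal identity to the real identity
  have fin : ∀ t : Set Ω, μ t ≠ ⊤ := fun t => measure_ne_top μ t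
  have conv : ∀ A' : Set ℝ, MeasurableSet A' →
      (μ {ω | 𝒮 (X ω) (Y ω) ∈ A'}).toReal
        = (1 / (1 - ε)) * (μ {ω | 𝒮 (X ω) (Ytil ω) ∈ A'}).toReal
          - (ε / ((K : ℝ) * (1 - ε))) * ∑ y : Fin K, (μ {ω | 𝒮 (X ω) y ∈ A'}).toReal := by
    intro A' hA'
    have h := key A' hA'
    have hreal : (μ {ω | 𝒮 (X ω) (Ytil ω) ∈ A'}).toReal
        = (1 - ε) * (μ {ω | 𝒮 (X ω) (Y ω) ∈ A'}).toReal
          + (ε / K) * ∑ y : Fin K, (μ {ω | 𝒮 (X ω) y ∈ A'}).toReal := by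
      rw [h, ENNReal.toReal_add, ENNReal.toReal_mul, ENNReal.toReal_mul, ENNReal.toReal_mul,
        ENNReal.toReal_ofReal (by linarith), ENNReal.toReal_ofReal (le_of_lt hε0),
        ENNReal.toReal_sum (fun y _ => fin _)]
      · simp [div_eq_mul_inv, mul_assoc]
      · exact ENNReal.mul_ne_top (ENNReal.ofReal_ne_top) (fin _)
      · have hKE : (K : ENNReal) ≠ 0 := Nat.cast_ne_zero.2 (by omega)
        exact ENNReal.mul_ne_top (ENNReal.mul_ne_top ENNReal.ofReal_ne_top
          (ENNReal.inv_ne_top.2 hKE))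
          (ENNReal.sum_ne_top.2 fun y _ => fin _)
    rw [hreal]
    field_simp
    ring
  constructor
  · have h := conv {s} (measurableSet_singleton s)
    simpa using h
  · have h := conv (Set.Ioi s) measurableSet_Ioi
    simpa using h
end

section
/- Let α ∈ (0,1), ε ∈ (0,1), K ∈ ℕ with K ≥ 1, let (η_t)_{t≥1} be a sequence of positive reals with the convention η_0^{−1} := 0, let (s̃_t)_{t≥1} and (s_{t,y})_{t≥1, 1≤y≤K} be arbitrary sequences in [0,1], let τ_1 ∈ [0,1], and define τ_{t+1} = τ_t − η_t·g̃(τ_t, s̃_t, (s_{t,y})_{y=1}^K). Then for every integer T ≥ 1: | Σ_{t=1}^T g̃(τ_t, s̃_t, (s_{t,y})_y) | ≤ (1 + (max_{1≤t≤T} η_t)·(1+ε)/(1−ε)) · Σ_{t=1}^T |η_t^{−1} − η_{t−1}^{−1}|. -/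
open Finset

lemma le_biSup_of_mem {ι : Type*} {s : Finset ι} (f : ι → ℝ) {i : ι} (hi : i ∈ s) :
    f i ≤ ⨆ j ∈ s, f j :=
  le_ciSup₂ (f := fun j (_ : j ∈ s) => f j)
    ((s.finite_toSet.image f).bddAbove.mono <|
      Set.iUnion_subset fun _ => Set.range_subset_iff.2 fun hj => Set.mem_image_of_mem f hj) i hi

lemma sum_Icc_sub_pred {M : Type*} [AddCommGroup M] (w : ℕ → M) (T : ℕ) :
    ∑ t ∈ Icc 1 T, (w t - w (t - 1)) = w T - w 0 := by
  induction T with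
  | zero => simp
  | succ T ih => rw [sum_Icc_succ_top (Nat.le_add_left 1 T), ih, Nat.add_sub_cancel]; abel

lemma sum_Icc_mul_sub_succ {R : Type*} [CommRing R] (w x : ℕ → R) (hw : w 0 = 0) (T : ℕ) :
    ∑ t ∈ Icc 1 T, w t * (x t - x (t + 1))
      = ∑ t ∈ Icc 1 T, (w t - w (t - 1)) * (x t - x (T + 1)) := by
  induction T with
  | zero => simp
  | succ T ih =>
    have hsplit : ∀ t, (w t - w (t - 1)) * (x t - x (T + 2))
        = (w t - w (t - 1)) * (x t - x (T + 1)) + (w t - w (t - 1)) * (x (T + 1) - x (T + 2)) :=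
      fun t => by ring
    rw [sum_Icc_succ_top (Nat.le_add_left 1 T), sum_Icc_succ_top (Nat.le_add_left 1 T), ih,
      sum_congr rfl fun t _ => hsplit t, sum_add_distrib, ← sum_mul, sum_Icc_sub_pred, hw,
      Nat.add_sub_cancel]
    ring

lemma abs_sum_mul_le {ι : Type*} {s : Finset ι} {f g : ι → ℝ} {D : ℝ}
    (hg : ∀ i ∈ s, |g i| ≤ D) : |∑ i ∈ s, f i * g i| ≤ D * ∑ i ∈ s, |f i| := by
  rw [mul_sum]
  refine (abs_sum_le_sum_abs _ _).trans (sum_le_sum fun i hi => ?_)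
  rw [abs_mul, mul_comm D]
  exact mul_le_mul_of_nonneg_left (hg i hi) (abs_nonneg _)

lemma abs_sum_mul_sub_succ_le (w x : ℕ → ℝ) (hw : w 0 = 0) {T : ℕ} {D : ℝ}
    (hx : ∀ t ∈ Icc 1 T, |x t - x (T + 1)| ≤ D) :
    |∑ t ∈ Icc 1 T, w t * (x t - x (t + 1))| ≤ D * ∑ t ∈ Icc 1 T, |w t - w (t - 1)| := by
  rw [sum_Icc_mul_sub_succ w x hw]
  exact abs_sum_mul_le hx

section Band

variable {l u M a b : ℝ}

lemma sub_mul_mem_Icc_of_sign {x η g : ℝ} (ha : 0 ≤ a) (hb : 0 ≤ b)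
    (hx : x ∈ Set.Icc (l - M * a) (u + M * b)) (hη : η ∈ Set.Icc 0 M) (hg : g ∈ Set.Icc (-b) a)
    (hu : u ≤ x → 0 ≤ g) (hl : x < l → g ≤ 0) :
    x - η * g ∈ Set.Icc (l - M * a) (u + M * b) := by
  obtain ⟨hη₀, hηM⟩ := hη
  constructor
  · rcases lt_or_ge x l with hxl | hxl
    · nlinarith [hl hxl, hx.1]
    · nlinarith [hg.2]
  · rcases le_or_gt u x with hxu | hxu
    · nlinarith [hu hxu, hx.2]
    · nlinarith [hg.1]

lemma mem_Icc_of_update {x η g : ℕ → ℝ} {T : ℕ} (ha : 0 ≤ a) (hb : 0 ≤ b) (hM : 0 ≤ M)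
    (h₁ : x 1 ∈ Set.Icc l u) (hη : ∀ t ∈ Icc 1 T, η t ∈ Set.Icc 0 M)
    (hg : ∀ t ∈ Icc 1 T, g t ∈ Set.Icc (-b) a) (hu : ∀ t ∈ Icc 1 T, u ≤ x t → 0 ≤ g t)
    (hl : ∀ t ∈ Icc 1 T, x t < l → g t ≤ 0)
    (hupd : ∀ t ∈ Icc 1 T, x (t + 1) = x t - η t * g t) :
    ∀ t ∈ Icc 1 (T + 1), x t ∈ Set.Icc (l - M * a) (u + M * b) := by
  intro t ht
  obtain ⟨ht₁, htT⟩ := mem_Icc.1 ht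
  induction t, ht₁ using Nat.le_induction with
  | base => exact ⟨by nlinarith [h₁.1], by nlinarith [h₁.2]⟩
  | succ t ht₁ ih =>
    have ht : t ∈ Icc 1 T := mem_Icc.2 ⟨ht₁, by omega⟩
    rw [hupd t ht]
    exact sub_mul_mem_Icc_of_sign ha hb (ih (mem_Icc.2 ⟨ht₁, by omega⟩) (by omega)) (hη t ht)
      (hg t ht) (hu t ht) (hl t ht)

end Band

lemma sub_mul_div_one_sub_mem_Icc {a b ε : ℝ} (ha : a ∈ Set.Icc 0 1) (hb : b ∈ Set.Icc 0 1)
    (hε₀ : 0 ≤ ε) (hε₁ : ε < 1) :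
    (a - ε * b) / (1 - ε) ∈ Set.Icc (-(ε / (1 - ε))) (1 / (1 - ε)) := by
  have hε : 0 ≤ 1 - ε := sub_nonneg.2 hε₁.le
  rw [← neg_div]
  exact ⟨div_le_div_of_nonneg_right (by nlinarith [ha.1, hb.2]) hε,
    div_le_div_of_nonneg_right (by nlinarith [ha.2, hb.1]) hε⟩

section RobustGrad

variable {α ε : ℝ} {K : ℕ} {τ stil : ℝ} {s : Fin K → ℝ}

lemma robustGrad_eq (hK : K ≠ 0) (hε : ε ≠ 1) :
    robustGrad α ε K τ stil s
      = ((if stil ≤ τ then 1 else 0) - ε * ((∑ y, if s y ≤ τ then 1 else 0) / K)) / (1 - ε)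
        - (1 - α) := by
  have hK' : (K : ℝ) ≠ 0 := Nat.cast_ne_zero.2 hK
  have hε' : 1 - ε ≠ 0 := sub_ne_zero.2 (Ne.symm hε)
  rw [robustGrad, sum_sub_distrib, sum_const, card_univ, Fintype.card_fin, nsmul_eq_mul]
  field_simp
  ring

lemma robustGrad_mem_Icc (hK : K ≠ 0) (hε₀ : 0 ≤ ε) (hε₁ : ε < 1) :
    robustGrad α ε K τ stil s ∈ Set.Icc (-(ε / (1 - ε) + (1 - α))) (1 / (1 - ε) - (1 - α)) := by
  have hK' : (0 : ℝ) < K := Nat.cast_pos.2 (Nat.pos_of_ne_zero hK)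
  have hind : ∀ x : ℝ, (if x ≤ τ then (1 : ℝ) else 0) ∈ Set.Icc 0 1 := fun x => by
    split_ifs <;> norm_num
  have hfrac : (∑ y, if s y ≤ τ then (1 : ℝ) else 0) / K ∈ Set.Icc 0 1 := by
    refine ⟨div_nonneg (sum_nonneg fun y _ => (hind _).1) hK'.le, (div_le_one hK').2 ?_⟩
    calc ∑ y, (if s y ≤ τ then (1 : ℝ) else 0) ≤ ∑ _y : Fin K, (1 : ℝ) :=
          sum_le_sum fun y _ => (hind _).2
      _ = K := by simp
  obtain ⟨hlo, hhi⟩ := sub_mul_div_one_sub_mem_Icc (hind stil) hfrac hε₀ hε₁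
  rw [robustGrad_eq hK hε₁.ne]
  constructor <;> linarith

lemma robustGrad_of_le (hK : K ≠ 0) (hε : ε ≠ 1) (hstil : stil ≤ τ) (hs : ∀ y, s y ≤ τ) :
    robustGrad α ε K τ stil s = α := by
  have hK' : (K : ℝ) ≠ 0 := Nat.cast_ne_zero.2 hK
  have hε' : 1 - ε ≠ 0 := sub_ne_zero.2 (Ne.symm hε)
  simp only [robustGrad_eq hK hε, if_pos hstil, if_pos (hs _), sum_const, card_univ,
    Fintype.card_fin, nsmul_eq_mul, mul_one, div_self hK']
  field_simp
  ring

lemma robustGrad_of_lt (hK : K ≠ 0) (hε : ε ≠ 1) (hstil : τ < stil) (hs : ∀ y, τ < s y) :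
    robustGrad α ε K τ stil s = α - 1 := by
  simp only [robustGrad_eq hK hε, if_neg (not_le.2 hstil), if_neg (not_le.2 (hs _)), sum_const_zero,
    zero_div, mul_zero, sub_zero, zero_div]
  ring

end RobustGrad

lemma robustGrad_update_mem_Icc {α ε M : ℝ} {K T : ℕ} {η stil τ : ℕ → ℝ} {s : ℕ → Fin K → ℝ}
    (hα₀ : 0 ≤ α) (hα₁ : α ≤ 1) (hε₀ : 0 ≤ ε) (hε₁ : ε < 1) (hK : K ≠ 0) (hM : 0 ≤ M)
    (hη : ∀ t ∈ Icc 1 T, η t ∈ Set.Icc 0 M)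
    (hstil : ∀ t, 1 ≤ t → stil t ∈ Set.Icc 0 1) (hs : ∀ t, 1 ≤ t → ∀ y, s t y ∈ Set.Icc 0 1)
    (hτ₁ : τ 1 ∈ Set.Icc 0 1)
    (hupd : ∀ t, 1 ≤ t → τ (t + 1) = τ t - η t * robustGrad α ε K (τ t) (stil t) (s t)) :
    ∀ t ∈ Icc 1 (T + 1), τ t ∈ Set.Icc (-(M * (1 / (1 - ε) - (1 - α))))
      (1 + M * (ε / (1 - ε) + (1 - α))) := by
  have hε' : 0 < 1 - ε := sub_pos.2 hε₁
  simpa only [zero_sub] using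
    mem_Icc_of_update (g := fun t => robustGrad α ε K (τ t) (stil t) (s t))
    (sub_nonneg.2 ((sub_le_self _ hα₀).trans (one_le_one_div hε' (sub_le_self _ hε₀))))
    (add_nonneg (div_nonneg hε₀ hε'.le) (sub_nonneg.2 hα₁)) hM hτ₁ hη
    (fun t _ => robustGrad_mem_Icc hK hε₀ hε₁)
    (fun t ht h => by
      have ht₁ := (mem_Icc.1 ht).1
      rw [robustGrad_of_le hK hε₁.ne ((hstil t ht₁).2.trans h) fun y => (hs t ht₁ y).2.trans h]
      exact hα₀)
    (fun t ht h => by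
      have ht₁ := (mem_Icc.1 ht).1
      rw [robustGrad_of_lt hK hε₁.ne (h.trans_le (hstil t ht₁).1)
        fun y => h.trans_le (hs t ht₁ y).1]
      linarith)
    (fun t ht => hupd t (mem_Icc.1 ht).1)

theorem nrocp_sum_grad_bounded_dynamic_lr_general
    (α ε : ℝ) (hα : α ∈ Set.Ioo (0:ℝ) 1) (hε : ε ∈ Set.Ioo (0:ℝ) 1)
    (K : ℕ) (hK : 1 ≤ K)
    (η : ℕ → ℝ) (hη : ∀ t, 1 ≤ t → 0 < η t) (hη0 : η 0 = 0)
    (stil : ℕ → ℝ) (hstil : ∀ t, 1 ≤ t → stil t ∈ Set.Icc (0:ℝ) 1)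
    (s : ℕ → Fin K → ℝ) (hs : ∀ t, 1 ≤ t → ∀ y, s t y ∈ Set.Icc (0:ℝ) 1)
    (τ : ℕ → ℝ) (hτ1 : τ 1 ∈ Set.Icc (0:ℝ) 1)
    (hupd : ∀ t, 1 ≤ t → τ (t + 1) = τ t - η t * robustGrad α ε K (τ t) (stil t) (s t))
    (T : ℕ) :
    |∑ t ∈ Finset.Icc 1 T, robustGrad α ε K (τ t) (stil t) (s t)|
      ≤ (1 + (⨆ t ∈ Finset.Icc 1 T, η t) * ((1 + ε) / (1 - ε)))
          * ∑ t ∈ Finset.Icc 1 T, |(η t)⁻¹ - (η (t - 1))⁻¹| := by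
  set M := ⨆ t ∈ Icc 1 T, η t
  have hM : 0 ≤ M :=
    Real.iSup_nonneg fun t => Real.iSup_nonneg fun ht => (hη t (mem_Icc.1 ht).1).le
  have hband := robustGrad_update_mem_Icc (M := M) (T := T) hα.1.le hα.2.le hε.1.le hε.2
    (by omega) hM (fun t ht => ⟨(hη t (mem_Icc.1 ht).1).le, le_biSup_of_mem η ht⟩)
    hstil hs hτ1 hupd
  have hgrad : ∀ t ∈ Icc 1 T,
      robustGrad α ε K (τ t) (stil t) (s t) = (η t)⁻¹ * (τ t - τ (t + 1)) := by
    intro t ht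
    have hηt := (hη t (mem_Icc.1 ht).1).ne'
    rw [hupd t (mem_Icc.1 ht).1]
    field_simp
    ring
  rw [sum_congr rfl hgrad]
  refine abs_sum_mul_sub_succ_le _ _ (by simp [hη0]) fun t ht => ?_
  have hdist := Real.dist_le_of_mem_Icc (hband t (Icc_subset_Icc_right T.le_succ ht))
    (hband (T + 1) (right_mem_Icc.2 le_add_self))
  rw [Real.dist_eq] at hdist
  exact hdist.trans_eq (by ring)

/-- telescoping bound on the accumulated robust pinball subgradients under
dynamic learning rates.  The convention `η₀⁻¹ = 0` is encoded by the hypothesis `η 0 = 0`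
(in `ℝ`, `(0 : ℝ)⁻¹ = 0`). -/
theorem nrocp_sum_grad_bounded_dynamic_lr
    (α ε : ℝ) (hα : α ∈ Set.Ioo (0:ℝ) 1) (hε : ε ∈ Set.Ioo (0:ℝ) 1)
    (K : ℕ) (hK : 1 ≤ K)
    (η : ℕ → ℝ) (hη : ∀ t, 1 ≤ t → 0 < η t) (hη0 : η 0 = 0)
    (stil : ℕ → ℝ) (hstil : ∀ t, 1 ≤ t → stil t ∈ Set.Icc (0:ℝ) 1)
    (s : ℕ → Fin K → ℝ) (hs : ∀ t, 1 ≤ t → ∀ y, s t y ∈ Set.Icc (0:ℝ) 1)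
    (τ : ℕ → ℝ) (hτ1 : τ 1 ∈ Set.Icc (0:ℝ) 1)
    (hupd : ∀ t, 1 ≤ t → τ (t + 1) = τ t - η t * robustGrad α ε K (τ t) (stil t) (s t))
    (T : ℕ) (hT : 1 ≤ T) :
    |∑ t ∈ Finset.Icc 1 T, robustGrad α ε K (τ t) (stil t) (s t)|
      ≤ (1 + (⨆ t ∈ Finset.Icc 1 T, η t) * ((1 + ε) / (1 - ε)))
          * ∑ t ∈ Finset.Icc 1 T, |(η t)⁻¹ - (η (t - 1))⁻¹| :=
  nrocp_sum_grad_bounded_dynamic_lr_general α ε hα hε K hK η hη hη0 stil hstil s hs τ hτ1 hupd T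
end

section
/- Under the single-step uniform label noise model with noise rate ε ∈ (0,1), for every α ∈ (0,1) and every fixed τ ∈ ℝ, the expected clean pinball subgradient decomposes as: E[1{S ≤ τ}] − (1−α) = (1/(1−ε))·( E[1{S̃ ≤ τ}] − (1−α) ) − (ε/(1−ε))·( (1/K)·E[ #{y ∈ {1,…,K} : S_y ≤ τ} ] − (1−α) ), where #{y : S_y ≤ τ} is the (random) cardinality of the prediction set {y ∈ {1,…,K} : S_y ≤ τ}. -/
/-
On the event `{U ≥ ε}` the noisy label is the clean label `Y`, and on `{U < ε}` it is the
independent uniform label `Ȳ`. Splitting `{S̃ ≤ τ}` along these events and along the value of `Ȳ`,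
independence of `U`, `Ȳ` and `(X, Y)` gives
`P(S̃ ≤ τ) = (1 - ε) P(S ≤ τ) + (ε / K) ∑ᵧ P(S_y ≤ τ) = (1 - ε) P(S ≤ τ) + (ε / K) E[#C(X)]`,
and the identity is this mixture formula solved for `P(S ≤ τ)`.
-/

open MeasureTheory

namespace ProbabilityTheory

lemma iIndep.measureReal_inter_inter_s18 {Ω : Type*} {_ : MeasurableSpace Ω} {μ : Measure Ω}
    {m : Fin 3 → MeasurableSpace Ω} (h : iIndep m μ) {s t u : Set Ω}
    (hs : MeasurableSet[m 0] s) (ht : MeasurableSet[m 1] t) (hu : MeasurableSet[m 2] u) :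
    μ.real (s ∩ t ∩ u) = μ.real s * μ.real t * μ.real u := by
  have h3 := h.meas_iInter (s := ![s, t, u]) fun i => by fin_cases i <;> assumption
  have hinter : ⋂ i, ![s, t, u] i = s ∩ t ∩ u := by
    ext ω
    simp [Fin.forall_fin_succ, and_assoc]
  rw [hinter, Fin.prod_univ_three] at h3
  simp only [measureReal_def, h3, ENNReal.toReal_mul]
  rfl

end ProbabilityTheory

open ProbabilityTheory Set Function

lemma measureReal_lt_of_map_eq_uniform {Ω : Type*} [MeasurableSpace Ω] {μ : Measure Ω}
    {U : Ω → ℝ} (hU : Measurable U) (hU_unif : μ.map U = volume.restrict (Icc 0 1))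
    {c : ℝ} (hc : c ∈ Icc 0 1) : μ.real {ω | U ω < c} = c := by
  have hIco : Iio c ∩ Icc 0 1 = Ico 0 c := by
    ext x
    simp only [mem_inter_iff, mem_Iio, mem_Icc, mem_Ico]
    grind
  change μ.real (U ⁻¹' Iio c) = c
  rw [← map_measureReal_apply hU measurableSet_Iio, hU_unif,
    measureReal_restrict_apply measurableSet_Iio, hIco, Real.volume_real_Ico_of_le hc.1, sub_zero]

section NoisyLabel

variable {Ω 𝒳 ι : Type*} [MeasurableSpace Ω] [MeasurableSpace 𝒳] [MeasurableSpace ι]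
  [MeasurableSingletonClass ι] [Fintype ι] {μ : Measure Ω} [IsProbabilityMeasure μ]
  {X : Ω → 𝒳} {Y Ybar : Ω → ι} {U : Ω → ℝ}

theorem measureReal_noisyLabel_mem (hX : Measurable X) (hY : Measurable Y) (hU : Measurable U)
    (hYbar : Measurable Ybar)
    (hIndep : iIndep
      ![MeasurableSpace.comap U inferInstance,
        MeasurableSpace.comap Ybar inferInstance,
        MeasurableSpace.comap (fun ω => (X ω, Y ω)) inferInstance] μ)
    (ε : ℝ) {A : Set (𝒳 × ι)} (hA : MeasurableSet A) :
    μ.real {ω | (X ω, if ε ≤ U ω then Y ω else Ybar ω) ∈ A}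
      = (1 - μ.real {ω | U ω < ε}) * μ.real {ω | (X ω, Y ω) ∈ A}
        + μ.real {ω | U ω < ε} * ∑ y, μ.real {ω | Ybar ω = y} * μ.real {ω | (X ω, y) ∈ A} := by
  have hUge : MeasurableSet[MeasurableSpace.comap U inferInstance] {ω | ε ≤ U ω} :=
    ⟨Ici ε, measurableSet_Ici, rfl⟩
  have hUlt : MeasurableSet[MeasurableSpace.comap U inferInstance] {ω | U ω < ε} :=
    ⟨Iio ε, measurableSet_Iio, rfl⟩
  have hYbar_eq (y : ι) :
      MeasurableSet[MeasurableSpace.comap Ybar inferInstance] {ω | Ybar ω = y} :=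
    ⟨{y}, measurableSet_singleton y, rfl⟩
  have hXY : MeasurableSet[MeasurableSpace.comap (fun ω => (X ω, Y ω)) inferInstance]
      {ω | (X ω, Y ω) ∈ A} := ⟨A, hA, rfl⟩
  have hXy (y : ι) : MeasurableSet[MeasurableSpace.comap (fun ω => (X ω, Y ω)) inferInstance]
      {ω | (X ω, y) ∈ A} :=
    ⟨Prod.fst ⁻¹' {x | (x, y) ∈ A}, measurable_fst (measurable_prodMk_right hA), rfl⟩
  have hsplit : {ω | (X ω, if ε ≤ U ω then Y ω else Ybar ω) ∈ A}
      = {ω | ε ≤ U ω} ∩ univ ∩ {ω | (X ω, Y ω) ∈ A}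
        ∪ ⋃ y, {ω | U ω < ε} ∩ {ω | Ybar ω = y} ∩ {ω | (X ω, y) ∈ A} := by
    ext ω
    by_cases h : ε ≤ U ω <;> simp [h, not_le.mp]
  have hslices_meas (y : ι) :
      MeasurableSet ({ω | U ω < ε} ∩ {ω | Ybar ω = y} ∩ {ω | (X ω, y) ∈ A}) :=
    ((hU.comap_le _ hUlt).inter (hYbar.comap_le _ (hYbar_eq y))).inter
      ((hX.prodMk hY).comap_le _ (hXy y))
  have hslices_disj : Pairwise (Disjoint on fun y =>
      {ω | U ω < ε} ∩ {ω | Ybar ω = y} ∩ {ω | (X ω, y) ∈ A}) :=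
    fun y z hyz => disjoint_left.2 fun ω hy hz => hyz (hy.1.2.symm.trans hz.1.2)
  have hdisj : Disjoint ({ω | ε ≤ U ω} ∩ univ ∩ {ω | (X ω, Y ω) ∈ A})
      (⋃ y, {ω | U ω < ε} ∩ {ω | Ybar ω = y} ∩ {ω | (X ω, y) ∈ A}) :=
    disjoint_iUnion_right.2 fun y => Disjoint.mono (inter_subset_left.trans inter_subset_left)
      (inter_subset_left.trans inter_subset_left)
      (disjoint_left.2 fun ω (h₁ : ε ≤ U ω) h₂ => not_lt.2 h₁ h₂)
  -- `univ` in the middle slot turns the triple product rule into pairwise independence.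
  rw [hsplit, measureReal_union hdisj (.iUnion hslices_meas),
    measureReal_iUnion_fintype hslices_disj hslices_meas,
    hIndep.measureReal_inter_inter_s18 hUge .univ hXY, Finset.mul_sum]
  simp only [hIndep.measureReal_inter_inter_s18 hUlt (hYbar_eq _) (hXy _), probReal_univ, mul_one,
    mul_assoc]
  rw [← probReal_compl_eq_one_sub (hU.comap_le _ hUlt), compl_ofPred]
  simp only [not_lt]

end NoisyLabel

section Indicator

variable {Ω : Type*} [MeasurableSpace Ω] {μ : Measure Ω}

lemma integral_ite_one_zero {p : Ω → Prop} [DecidablePred p] (hp : MeasurableSet {ω | p ω}) :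
    ∫ ω, (if p ω then (1 : ℝ) else 0) ∂μ = μ.real {ω | p ω} := by
  rw [← integral_indicator_one hp]
  congr with ω
  simp [indicator_apply]

lemma integral_card_filter {ι : Type*} [Fintype ι] [IsFiniteMeasure μ] {p : ι → Ω → Prop}
    [∀ i, DecidablePred (p i)] (hp : ∀ i, MeasurableSet {ω | p i ω}) :
    ∫ ω, ((Finset.univ.filter fun i => p i ω).card : ℝ) ∂μ = ∑ i, μ.real {ω | p i ω} := by
  simp only [Finset.card_filter, Nat.cast_sum, Nat.cast_ite, Nat.cast_one, Nat.cast_zero]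
  rw [integral_finsetSum]
  · exact Finset.sum_congr rfl fun i _ => integral_ite_one_zero (hp i)
  · intro i _
    have hind : (fun ω => if p i ω then (1 : ℝ) else 0) = {ω | p i ω}.indicator 1 := by
      ext ω
      simp [indicator_apply]
    rw [hind]
    exact (integrable_const 1).indicator (hp i)

end Indicator

theorem expected_clean_grad_decomposition_general
    {Ω 𝒳 : Type*} [MeasurableSpace Ω] [MeasurableSpace 𝒳]
    (μ : Measure Ω) [IsProbabilityMeasure μ]
    (K : ℕ) (ε : ℝ) (hε : ε ∈ Set.Ioo (0:ℝ) 1)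
    (X : Ω → 𝒳) (Y : Ω → Fin K) (U : Ω → ℝ) (Ybar : Ω → Fin K)
    (hX : Measurable X) (hY : Measurable Y) (hU : Measurable U) (hYbar : Measurable Ybar)
    -- U is uniformly distributed on [0,1]
    (hU_unif : Measure.map U μ = volume.restrict (Set.Icc (0:ℝ) 1))
    -- Ȳ is uniformly distributed on {1,…,K}
    (hYbar_unif : ∀ y : Fin K, μ {ω | Ybar ω = y} = (K : ENNReal)⁻¹)
    -- U, Ȳ and the pair (X, Y) are mutually independent
    (hIndep : iIndep
      ![MeasurableSpace.comap U inferInstance,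
        MeasurableSpace.comap Ybar inferInstance,
        MeasurableSpace.comap (fun ω => (X ω, Y ω)) inferInstance] μ)
    -- the score function, measurable with values in [0,1]
    (𝒮 : 𝒳 → Fin K → ℝ) (h𝒮 : ∀ y, Measurable fun x => 𝒮 x y)
    -- the noisy label
    (Ytil : Ω → Fin K) (hYtil : ∀ ω, Ytil ω = if ε ≤ U ω then Y ω else Ybar ω)
    (α τ : ℝ) :
    (∫ ω, (if 𝒮 (X ω) (Y ω) ≤ τ then (1:ℝ) else 0) ∂μ) - (1 - α)
      = (1 / (1 - ε)) * ((∫ ω, (if 𝒮 (X ω) (Ytil ω) ≤ τ then (1:ℝ) else 0) ∂μ) - (1 - α))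
        - (ε / (1 - ε))
            * ((1 / (K : ℝ))
                * (∫ ω, (((Finset.univ.filter fun y : Fin K => 𝒮 (X ω) y ≤ τ)).card : ℝ) ∂μ)
              - (1 - α)) := by
  obtain ⟨hε0, hε1⟩ := hε
  obtain rfl : Ytil = fun ω => if ε ≤ U ω then Y ω else Ybar ω := funext hYtil
  have hA : MeasurableSet {p : 𝒳 × Fin K | 𝒮 p.1 p.2 ≤ τ} :=
    (measurable_from_prod_countable_left h𝒮 : Measurable fun p : 𝒳 × Fin K => 𝒮 p.1 p.2)
      measurableSet_Iic
  have hmix := measureReal_noisyLabel_mem hX hY hU hYbar hIndep ε hA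
  have hswitch := measureReal_lt_of_map_eq_uniform hU hU_unif ⟨hε0.le, hε1.le⟩
  have hYbar_real (y : Fin K) : μ.real {ω | Ybar ω = y} = (K : ℝ)⁻¹ := by
    simp [measureReal_def, hYbar_unif]
  simp only [mem_ofPred_eq, hswitch, hYbar_real, ← Finset.mul_sum] at hmix
  have hclean_meas : MeasurableSet {ω | 𝒮 (X ω) (Y ω) ≤ τ} := hX.prodMk hY hA
  have hnoisy_meas : MeasurableSet {ω | 𝒮 (X ω) (if ε ≤ U ω then Y ω else Ybar ω) ≤ τ} :=
    hX.prodMk (Measurable.ite (measurableSet_le measurable_const hU) hY hYbar) hA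
  have hslice_meas (y : Fin K) : MeasurableSet {ω | 𝒮 (X ω) y ≤ τ} :=
    (h𝒮 y).comp hX measurableSet_Iic
  beta_reduce
  rw [integral_ite_one_zero hclean_meas, integral_ite_one_zero hnoisy_meas,
    integral_card_filter hslice_meas, hmix]
  field_simp
  ring

/-- decomposition of the expected clean pinball subgradient in terms of the
noisy score and the expected size of the conformal prediction set, under the single-step
uniform label noise model. -/
theorem expected_clean_grad_decomposition
    {Ω 𝒳 : Type*} [MeasurableSpace Ω] [MeasurableSpace 𝒳]
    (μ : Measure Ω) [IsProbabilityMeasure μ]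
    (K : ℕ) (hK : 1 ≤ K) (ε : ℝ) (hε : ε ∈ Set.Ioo (0:ℝ) 1)
    (X : Ω → 𝒳) (Y : Ω → Fin K) (U : Ω → ℝ) (Ybar : Ω → Fin K)
    (hX : Measurable X) (hY : Measurable Y) (hU : Measurable U) (hYbar : Measurable Ybar)
    -- U is uniformly distributed on [0,1]
    (hU_unif : Measure.map U μ = volume.restrict (Set.Icc (0:ℝ) 1))
    -- Ȳ is uniformly distributed on {1,…,K}
    (hYbar_unif : ∀ y : Fin K, μ {ω | Ybar ω = y} = (K : ENNReal)⁻¹)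
    -- U, Ȳ and the pair (X, Y) are mutually independent
    (hIndep : iIndep
      ![MeasurableSpace.comap U inferInstance,
        MeasurableSpace.comap Ybar inferInstance,
        MeasurableSpace.comap (fun ω => (X ω, Y ω)) inferInstance] μ)
    -- the score function, measurable with values in [0,1]
    (𝒮 : 𝒳 → Fin K → ℝ) (h𝒮 : ∀ y, Measurable fun x => 𝒮 x y)
    (h𝒮range : ∀ x y, 𝒮 x y ∈ Set.Icc (0:ℝ) 1)
    -- the noisy label
    (Ytil : Ω → Fin K) (hYtil : ∀ ω, Ytil ω = if ε ≤ U ω then Y ω else Ybar ω)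
    (α τ : ℝ) (hα : α ∈ Set.Ioo (0:ℝ) 1) :
    (∫ ω, (if 𝒮 (X ω) (Y ω) ≤ τ then (1:ℝ) else 0) ∂μ) - (1 - α)
      = (1 / (1 - ε)) * ((∫ ω, (if 𝒮 (X ω) (Ytil ω) ≤ τ then (1:ℝ) else 0) ∂μ) - (1 - α))
        - (ε / (1 - ε))
            * ((1 / (K : ℝ))
                * (∫ ω, (((Finset.univ.filter fun y : Fin K => 𝒮 (X ω) y ≤ τ)).card : ℝ) ∂μ)
              - (1 - α)) :=
  expected_clean_grad_decomposition_general μ K ε hε X Y U Ybar hX hY hU hYbar hU_unif hYbar_unif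
    hIndep 𝒮 h𝒮 Ytil hYtil α τ
end
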